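/- arXiv:1203.4967 — 8 statements merged into one kernel-verified Lean document; each statement's English description precedes it below -/
import Mathlib

section
/- For |z| < 1, the infinite product ∏_{m=1}^∞ 1/(1−z^m) converges and equals the power series Σ_{k=0}^∞ p(k) z^k, where p(k) is the partition function. -/
/-!
Expanding each factor `(1 - z^m)⁻¹` as a geometric series and multiplying out the (absolutely
convergent) series, the partial product over `m ≤ n` equals `∑ₖ pₙ(k) zᵏ`, where `pₙ(k)` counts
the partitions of `k` into parts `≤ n`. Since `pₙ(k) ≤ p(k)`, with equality once `k ≤ n`,
dominated convergence for series lets `n → ∞`, provided `∑ p(k) |z|ᵏ` converges. That in turn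
holds because its partial sums up to `n` are at most the partial product at `|z|`, which is
bounded by `exp (∑ₘ |z|ᵐ / (1 - |z|))`.
-/

open Filter Finset PowerSeries

namespace Nat.Partition

theorem card_restricted_le_eq_card {k n : ℕ} (h : k ≤ n) :
    #(restricted k (· ≤ n)) = Fintype.card k.Partition := by
  rw [restricted, filter_true_of_mem fun p _ i hi => (le_of_mem_parts hi).trans h,
    Finset.card_univ]

end Nat.Partition

namespace PowerSeries

noncomputable def multiplesIndicator (R : Type*) [Semiring R] (m : ℕ) : R⟦X⟧ :=
  mk fun k => if m ∣ k then 1 else 0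

open WithPiTopology in
theorem hasSum_X_pow_mul {R : Type*} [Semiring R] [TopologicalSpace R] {m : ℕ} (hm : m ≠ 0) :
    HasSum (fun j => (X : R⟦X⟧) ^ (m * j)) (multiplesIndicator R m) := by
  rw [hasSum_iff_hasSum_coeff]
  intro k
  simp only [coeff_X_pow, multiplesIndicator, coeff_mk]
  by_cases hk : m ∣ k
  · obtain ⟨j, rfl⟩ := hk
    simpa [mul_right_inj' hm, eq_comm] using hasSum_ite_eq j (1 : R)
  · convert (hasSum_zero : HasSum (fun _ : ℕ => (0 : R)) 0) with j
    · exact if_neg fun h : k = m * j => hk (h ▸ dvd_mul_right m j)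
    · exact if_neg hk

open WithPiTopology in
theorem mk_card_restricted_le_eq_prod {R : Type*} [CommSemiring R] (n : ℕ) :
    mk (fun k => (#(Nat.Partition.restricted k (· ≤ n)) : R)) =
      ∏ i ∈ range n, multiplesIndicator R (i + 1) := by
  -- Any topology will do: the discrete one makes Mathlib's infinite-product identity available.
  let _ : TopologicalSpace R := ⊥
  have _ : DiscreteTopology R := ⟨rfl⟩
  refine (Nat.Partition.hasProd_powerSeriesMk_card_restricted R (· ≤ n)).unique ?_
  have hfactor : ∀ i ∈ range n, (if i + 1 ≤ n then ∑' j, (X : R⟦X⟧) ^ ((i + 1) * j) else 1) =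
      multiplesIndicator R (i + 1) := fun i hi => by
    rw [if_pos (Nat.succ_le_of_lt (mem_range.1 hi)), (hasSum_X_pow_mul i.succ_ne_zero).tsum_eq]
  rw [← prod_congr rfl hfactor]
  exact hasProd_prod_of_ne_finset_one fun i hi => if_neg (by simpa using hi)

section Evaluation

variable {R : Type*} [NormedCommRing R] [CompleteSpace R] {z : R}

theorem summable_norm_and_tsum_coeff_mul_mul_pow {f g : R⟦X⟧}
    (hf : Summable fun k => ‖coeff k f * z ^ k‖) (hg : Summable fun k => ‖coeff k g * z ^ k‖) :
    (Summable fun k => ‖coeff k (f * g) * z ^ k‖) ∧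
      ∑' k, coeff k (f * g) * z ^ k = (∑' k, coeff k f * z ^ k) * ∑' k, coeff k g * z ^ k := by
  have hcauchy : ∀ k, coeff k (f * g) * z ^ k =
      ∑ ij ∈ antidiagonal k, (coeff ij.1 f * z ^ ij.1) * (coeff ij.2 g * z ^ ij.2) := fun k => by
    rw [coeff_mul, sum_mul]
    refine sum_congr rfl fun ij hij => ?_
    rw [← mem_antidiagonal.1 hij, pow_add]
    ring
  simp only [hcauchy]
  refine ⟨?_, ?_⟩
  · exact summable_norm_sum_mul_antidiagonal_of_summable_norm
      (f := fun k => coeff k f * z ^ k) (g := fun k => coeff k g * z ^ k) hf hg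
  · exact (tsum_mul_tsum_eq_tsum_sum_antidiagonal_of_summable_norm
      (f := fun k => coeff k f * z ^ k) (g := fun k => coeff k g * z ^ k) hf hg).symm

theorem summable_norm_and_tsum_coeff_prod_mul_pow {ι : Type*} (s : Finset ι) {f : ι → R⟦X⟧}
    (hf : ∀ i ∈ s, Summable fun k => ‖coeff k (f i) * z ^ k‖) :
    (Summable fun k => ‖coeff k (∏ i ∈ s, f i) * z ^ k‖) ∧
      ∑' k, coeff k (∏ i ∈ s, f i) * z ^ k = ∏ i ∈ s, ∑' k, coeff k (f i) * z ^ k := by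
  induction s using Finset.cons_induction with
  | empty =>
    have hone : ∀ k, coeff k (1 : R⟦X⟧) * z ^ k = Pi.single (M := fun _ => R) 0 1 k := fun k => by
      rcases eq_or_ne k 0 with rfl | hk <;> simp [coeff_one, *]
    simp only [prod_empty, hone, tsum_pi_single, and_true]
    exact summable_of_ne_finset_zero (s := {0}) fun k hk => by simp_all
  | cons i s _ ih =>
    rw [forall_mem_cons] at hf
    obtain ⟨hsum, htsum⟩ := ih hf.2
    simp only [prod_cons, ← htsum]
    exact summable_norm_and_tsum_coeff_mul_mul_pow hf.1 hsum

end Evaluation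

theorem summable_norm_and_tsum_coeff_multiplesIndicator_mul_pow {𝕜 : Type*} [NormedField 𝕜]
    {z : 𝕜} {m : ℕ} (hm : m ≠ 0) (hz : ‖z‖ < 1) :
    (Summable fun k => ‖coeff k (multiplesIndicator 𝕜 m) * z ^ k‖) ∧
      ∑' k, coeff k (multiplesIndicator 𝕜 m) * z ^ k = (1 - z ^ m)⁻¹ := by
  simp only [multiplesIndicator, coeff_mk]
  refine ⟨.of_nonneg_of_le (fun _ => norm_nonneg _) (fun k => ?_)
    (summable_geometric_of_lt_one (norm_nonneg z) hz), ?_⟩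
  · split_ifs <;> simp
  · have hmul : Function.Injective (m * ·) := fun a b hab => by simpa [hm] using hab
    have hsupp : ∀ k ∉ Set.range (m * ·), (if m ∣ k then (1 : 𝕜) else 0) * z ^ k = 0 :=
      fun k hk => by rw [if_neg fun ⟨j, hj⟩ => hk ⟨j, hj.symm⟩, zero_mul]
    refine ((hmul.hasSum_iff hsupp).mp ?_).tsum_eq
    simpa [Function.comp_def, pow_mul] using hasSum_geometric_of_norm_lt_one
      (by simpa using pow_lt_one₀ (norm_nonneg z) hz hm : ‖z ^ m‖ < 1)

end PowerSeries

theorem prod_inv_one_sub_pow_succ_le_exp {x : ℝ} (hx0 : 0 ≤ x) (hx1 : x < 1) (n : ℕ) :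
    ∏ i ∈ range n, (1 - x ^ (i + 1))⁻¹ ≤ Real.exp (∑' i : ℕ, x ^ (i + 1) / (1 - x)) := by
  have hfactor (i : ℕ) : (1 - x ^ (i + 1))⁻¹ ≤ 1 + x ^ (i + 1) / (1 - x) := by
    set y := x ^ (i + 1)
    have hy : y ≤ x := pow_le_of_le_one hx0 hx1.le i.succ_ne_zero
    have hgain : y ≤ y * (1 - y) / (1 - x) := by
      rw [le_div_iff₀ (by linarith)]
      exact mul_le_mul_of_nonneg_left (by linarith) (by positivity)
    rw [inv_le_iff_one_le_mul₀' (by linarith)]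
    calc 1 ≤ 1 - y + y * (1 - y) / (1 - x) := by linarith
      _ = (1 - y) * (1 + y / (1 - x)) := by ring
  have hpos (i : ℕ) : 0 < 1 - x ^ (i + 1) := sub_pos.2 (pow_lt_one₀ hx0 hx1 i.succ_ne_zero)
  have hnonneg (i : ℕ) : 0 ≤ x ^ (i + 1) / (1 - x) := div_nonneg (by positivity) (by linarith)
  have hsummable : Summable fun i : ℕ => x ^ (i + 1) / (1 - x) :=
    ((summable_nat_add_iff 1).mpr (summable_geometric_of_lt_one hx0 hx1)).div_const _
  calc ∏ i ∈ range n, (1 - x ^ (i + 1))⁻¹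
      ≤ ∏ i ∈ range n, (1 + x ^ (i + 1) / (1 - x)) :=
        prod_le_prod (fun i _ => (inv_pos.2 (hpos i)).le) fun i _ => hfactor i
    _ ≤ Real.exp (∑ i ∈ range n, x ^ (i + 1) / (1 - x)) := Real.prod_one_add_le_exp_sum _ hnonneg
    _ ≤ Real.exp (∑' i : ℕ, x ^ (i + 1) / (1 - x)) :=
        Real.exp_le_exp.2 (hsummable.sum_le_tsum _ fun i _ => hnonneg i)

namespace Nat.Partition

theorem summable_norm_and_tsum_card_restricted_le_mul_pow {𝕜 : Type*} [NormedField 𝕜]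
    [CompleteSpace 𝕜] (n : ℕ) {z : 𝕜} (hz : ‖z‖ < 1) :
    (Summable fun k => ‖(#(restricted k (· ≤ n)) : 𝕜) * z ^ k‖) ∧
      ∑' k, (#(restricted k (· ≤ n)) : 𝕜) * z ^ k = ∏ i ∈ range n, (1 - z ^ (i + 1))⁻¹ := by
  have hfactor (i : ℕ) :=
    summable_norm_and_tsum_coeff_multiplesIndicator_mul_pow i.succ_ne_zero hz
  have hprod := summable_norm_and_tsum_coeff_prod_mul_pow (range n) fun i _ => (hfactor i).1
  simpa only [← mk_card_restricted_le_eq_prod, coeff_mk, fun i => (hfactor i).2] using hprod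

theorem summable_card_mul_pow {x : ℝ} (hx0 : 0 ≤ x) (hx1 : x < 1) :
    Summable fun k => (Fintype.card k.Partition : ℝ) * x ^ k := by
  refine summable_of_sum_range_le (c := Real.exp (∑' i : ℕ, x ^ (i + 1) / (1 - x)))
    (fun k => by positivity) fun n => ?_
  obtain ⟨hsummable, htsum⟩ := summable_norm_and_tsum_card_restricted_le_mul_pow n
    (by rwa [Real.norm_of_nonneg hx0] : ‖x‖ < 1)
  calc ∑ k ∈ range n, (Fintype.card k.Partition : ℝ) * x ^ k
      = ∑ k ∈ range n, (#(restricted k (· ≤ n)) : ℝ) * x ^ k :=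
        sum_congr rfl fun k hk => by rw [card_restricted_le_eq_card (mem_range.1 hk).le]
    _ ≤ ∑' k, (#(restricted k (· ≤ n)) : ℝ) * x ^ k :=
        hsummable.of_norm.sum_le_tsum _ fun k _ => by positivity
    _ = ∏ i ∈ range n, (1 - x ^ (i + 1))⁻¹ := htsum
    _ ≤ _ := prod_inv_one_sub_pow_succ_le_exp hx0 hx1 n

end Nat.Partition

/-- For `|z| < 1`, the partial products of `∏_{m=1}^∞ 1/(1 - z^m)` converge to the
value of the power series `∑_{k=0}^∞ p(k) z^k`, where `p` is the partition function. -/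
theorem euler_product_partition_generating_function (z : ℂ) (hz : ‖z‖ < 1) :
    Tendsto (fun n => ∏ m ∈ range n, (1 - z ^ (m + 1))⁻¹) atTop
      (nhds (∑' k : ℕ, (Fintype.card (Nat.Partition k) : ℂ) * z ^ k)) := by
  refine (tendsto_tsum_of_dominated_convergence
    (Nat.Partition.summable_card_mul_pow (norm_nonneg z) hz) (fun k => ?_)
    (.of_forall fun n k => ?_)).congr fun n =>
      (Nat.Partition.summable_norm_and_tsum_card_restricted_le_mul_pow n hz).2
  · exact tendsto_atTop_of_eventually_const fun n (hn : k ≤ n) => by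
      rw [Nat.Partition.card_restricted_le_eq_card hn]
  · rw [norm_mul, norm_pow, Complex.norm_natCast]
    gcongr
    exact card_le_univ _
end

section
/- (Euler's pentagonal number theorem) For |z| < 1, ∏_{m=1}^∞ (1−z^m) = 1 + Σ_{j=1}^∞ (−1)^j (z^{(3j²−j)/2} + z^{(3j²+j)/2}). -/
/-!
Mathlib's `Pentagonal.tprod_one_sub_pow` runs Euler's recursion
`A_k = 1 - x ^ (2k + 3) - x ^ (3k + 5) A_(k+1)` for the auxiliary series
`A_k = ∑' n, x ^ ((k + 1) n) ∏_{i ≤ n} (1 - x ^ (k + i + 1))` in any commutative topological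
ring, given that these series and the products converge and that the remainder after `j` steps
of the recursion tends to zero. For `‖x‖ < 1` all of this follows from the bound
`‖∏ i ∈ range n, (1 - x ^ (k + i + 1))‖ ≤ exp (1 - ‖x‖)⁻¹`, uniform in `k` and `n`: it dominates
every `A_k` by a geometric series, so the `A_k` are bounded uniformly while the powers of `x` in
front of them tend to zero.
-/

open Filter Finset

theorem pentagonal_natCast (n : ℕ) : pentagonal n = (3 * n ^ 2 - n) / 2 := by
  grind [pentagonal_def]

theorem pentagonal_neg_natCast (n : ℕ) : pentagonal (-n) = (3 * n ^ 2 + n) / 2 := by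
  grind [pentagonal_neg]

section NormedRing

variable {R : Type*} [NormedRing R] {x : R}

theorem norm_neg_one_pow_mul_le (n : ℕ) (y : R) : ‖(-1) ^ n * y‖ ≤ ‖y‖ := by
  rcases neg_one_pow_eq_or R n with h | h <;> simp [h]

variable [CompleteSpace R]

theorem summable_neg_one_pow_mul_pow_comp (hx : ‖x‖ < 1) {f : ℕ → ℕ} (hf : f.Injective) :
    Summable fun k ↦ (-1) ^ k * x ^ f k :=
  .of_norm_bounded ((summable_norm_geometric_of_norm_lt_one hx).comp_injective hf)
    fun k ↦ norm_neg_one_pow_mul_le k _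

theorem summable_neg_one_pow_mul_pow_pentagonal_neg (hx : ‖x‖ < 1) :
    Summable fun k : ℕ ↦ (-1) ^ k * x ^ pentagonal (-k) :=
  summable_neg_one_pow_mul_pow_comp hx <|
    pentagonal_injective.comp <| neg_injective.comp Nat.cast_injective

theorem summable_neg_one_pow_mul_pow_pentagonal_add_one (hx : ‖x‖ < 1) :
    Summable fun k : ℕ ↦ (-1) ^ k * x ^ pentagonal (k + 1) :=
  summable_neg_one_pow_mul_pow_comp hx <|
    pentagonal_injective.comp <| (add_left_injective 1).comp Nat.cast_injective

theorem tsum_pentagonal_eq_one_add (hx : ‖x‖ < 1) :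
    ∑' k : ℕ, (-1) ^ k * (x ^ pentagonal (-k) - x ^ pentagonal (k + 1)) =
      1 + ∑' j : ℕ, (-1) ^ (j + 1) *
        (x ^ ((3 * (j + 1) ^ 2 - (j + 1)) / 2) + x ^ ((3 * (j + 1) ^ 2 + (j + 1)) / 2)) := by
  have hneg := summable_neg_one_pow_mul_pow_pentagonal_neg hx
  have hadd := summable_neg_one_pow_mul_pow_pentagonal_add_one hx
  simp only [mul_sub]
  rw [hneg.tsum_sub hadd, hneg.tsum_eq_zero_add, add_sub_assoc,
    ← ((summable_nat_add_iff 1).2 hneg).tsum_sub hadd]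
  congr 1
  · simp [pentagonal]
  · refine tsum_congr fun j ↦ ?_
    have h := pentagonal_natCast (j + 1)
    push_cast at h
    rw [h, pentagonal_neg_natCast, pow_succ, mul_neg_one, neg_mul, neg_mul, mul_add]
    abel

end NormedRing

section NormedCommRing

variable {R : Type*} [NormedCommRing R] [NormOneClass R] {x : R}

variable (x) in
def powMulProdOneSubPow (k n : ℕ) : R :=
  x ^ ((k + 1) * n) * ∏ i ∈ range (n + 1), (1 - x ^ (k + i + 1))

theorem norm_prod_one_sub_pow_le (hx : ‖x‖ < 1) (k n : ℕ) :
    ‖∏ i ∈ range n, (1 - x ^ (k + i + 1))‖ ≤ Real.exp (1 - ‖x‖)⁻¹ := by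
  have hgeom : ∑ i ∈ range n, ‖x ^ (k + i + 1)‖ ≤ (1 - ‖x‖)⁻¹ := calc
    _ ≤ ∑ i ∈ range n, ‖x‖ ^ i := sum_le_sum fun i _ ↦
        (norm_pow_le x _).trans (pow_le_pow_of_le_one (norm_nonneg x) hx.le (by omega))
    _ ≤ (1 - ‖x‖)⁻¹ := by
        simpa using geom_sum_Ico_le_of_lt_one (m := 0) (n := n) (norm_nonneg x) hx
  calc _ ≤ ∏ i ∈ range n, ‖1 - x ^ (k + i + 1)‖ := norm_prod_le _ _
    _ ≤ ∏ i ∈ range n, Real.exp ‖x ^ (k + i + 1)‖ :=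
        prod_le_prod (fun _ _ ↦ norm_nonneg _) fun i _ ↦ (norm_sub_le _ _).trans <| by
          rw [norm_one, add_comm]
          exact Real.add_one_le_exp _
    _ = Real.exp (∑ i ∈ range n, ‖x ^ (k + i + 1)‖) := (Real.exp_sum _ _).symm
    _ ≤ Real.exp (1 - ‖x‖)⁻¹ := Real.exp_le_exp.2 hgeom

theorem norm_powMulProdOneSubPow_le (hx : ‖x‖ < 1) (k n : ℕ) :
    ‖powMulProdOneSubPow x k n‖ ≤ Real.exp (1 - ‖x‖)⁻¹ * ‖x‖ ^ n := by
  rw [powMulProdOneSubPow, mul_comm (Real.exp _)]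
  refine (norm_mul_le _ _).trans <|
    mul_le_mul ?_ (norm_prod_one_sub_pow_le hx k (n + 1)) (norm_nonneg _) (by positivity)
  exact (norm_pow_le _ _).trans <|
    pow_le_pow_of_le_one (norm_nonneg x) hx.le (Nat.le_mul_of_pos_left n k.succ_pos)

theorem norm_tsum_powMulProdOneSubPow_le (hx : ‖x‖ < 1) (k : ℕ) :
    ‖∑' n, powMulProdOneSubPow x k n‖ ≤ Real.exp (1 - ‖x‖)⁻¹ * (1 - ‖x‖)⁻¹ :=
  tsum_of_norm_bounded ((hasSum_geometric_of_lt_one (norm_nonneg x) hx).mul_left _)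
    (norm_powMulProdOneSubPow_le hx k)

theorem tendsto_neg_one_pow_mul_pow_mul_tsum_powMulProdOneSubPow (hx : ‖x‖ < 1)
    {e : ℕ → ℕ} (he : ∀ k, k ≤ e k) :
    Tendsto (fun k ↦ (-1) ^ (k + 1) * x ^ e k * ∑' n, powMulProdOneSubPow x k n)
      atTop (nhds 0) := by
  refine squeeze_zero_norm (a := fun k ↦ ‖x‖ ^ k * (Real.exp (1 - ‖x‖)⁻¹ * (1 - ‖x‖)⁻¹))
    (fun k ↦ ?_) ?_
  · rw [mul_assoc]
    refine (norm_neg_one_pow_mul_le _ _).trans <| (norm_mul_le _ _).trans <|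
      mul_le_mul ?_ (norm_tsum_powMulProdOneSubPow_le hx k) (norm_nonneg _) (by positivity)
    exact (norm_pow_le _ _).trans (pow_le_pow_of_le_one (norm_nonneg x) hx.le (he k))
  · simpa using (tendsto_pow_atTop_nhds_zero_of_lt_one (norm_nonneg x) hx).mul_const _

variable [CompleteSpace R]

theorem summable_powMulProdOneSubPow (hx : ‖x‖ < 1) (k : ℕ) :
    Summable (powMulProdOneSubPow x k) :=
  .of_norm_bounded ((summable_geometric_of_lt_one (norm_nonneg x) hx).mul_left _)
    (norm_powMulProdOneSubPow_le hx k)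

theorem multipliable_one_sub_pow_add (hx : ‖x‖ < 1) (k : ℕ) :
    Multipliable fun n ↦ 1 - x ^ (n + k + 1) := by
  have h : Summable fun n ↦ ‖-x ^ (n + k + 1)‖ := by
    simpa only [norm_neg, add_assoc] using
      (summable_nat_add_iff (k + 1)).2 (summable_norm_geometric_of_norm_lt_one hx)
  simpa only [sub_eq_add_neg] using multipliable_one_add_of_summable h

theorem tprod_one_sub_pow_eq_tsum_pentagonal (hx : ‖x‖ < 1) :
    ∏' n, (1 - x ^ (n + 1)) =
      ∑' k : ℕ, (-1) ^ k * (x ^ pentagonal (-k) - x ^ pentagonal (k + 1)) := by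
  refine Pentagonal.tprod_one_sub_pow (tendsto_pow_atTop_nhds_zero_of_norm_lt_one hx)
    (summable_powMulProdOneSubPow hx) (multipliable_one_sub_pow_add hx) ?_ ?_
  · simpa only [mul_sub] using (summable_neg_one_pow_mul_pow_pentagonal_neg hx).sub
      (summable_neg_one_pow_mul_pow_pentagonal_add_one hx)
  · refine tendsto_neg_one_pow_mul_pow_mul_tsum_powMulProdOneSubPow hx fun k ↦ ?_
    rw [Nat.le_div_iff_mul_le two_pos]
    nlinarith

end NormedCommRing

/-- Euler's pentagonal number theorem: for `|z| < 1`,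
`∏_{m=1}^∞ (1 - z^m) = 1 + ∑_{j=1}^∞ (-1)^j (z^{(3j²-j)/2} + z^{(3j²+j)/2})`. -/
theorem pentagonal_number_theorem (z : ℂ) (hz : ‖z‖ < 1) :
    Tendsto (fun n => ∏ m ∈ range n, (1 - z ^ (m + 1))) atTop
      (nhds (1 + ∑' j : ℕ, (-1 : ℂ) ^ (j + 1) *
        (z ^ ((3 * (j + 1) ^ 2 - (j + 1)) / 2) + z ^ ((3 * (j + 1) ^ 2 + (j + 1)) / 2)))) := by
  rw [← tsum_pentagonal_eq_one_add hz, ← tprod_one_sub_pow_eq_tsum_pentagonal hz]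
  exact (multipliable_one_sub_pow_add hz 0).tendsto_prod_tprod_nat
end

section
/- For every positive integer n, the difference between the number of partitions of n into an even number of distinct parts and the number of partitions of n into an odd number of distinct parts equals (−1)^j if n = j(3j±1)/2 for some positive integer j, and equals 0 otherwise. -/
/-!
Expanding `∏ i ≥ 1, (1 - X ^ i)`, a choice of the terms `-X ^ i` from finitely many factors is a
partition into distinct parts, counted with sign `(-1) ^ #parts`, so the coefficient of `X ^ n` is
`D_e(n) - D_o(n)`. Euler's pentagonal number theorem identifies the same product with
`∑ k : ℤ, (-1) ^ k X ^ (k (3k - 1) / 2)`; comparing coefficients gives the claim, the index `k = 0`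
being excluded by `0 < n`.
-/

open Finset

/-- The number of partitions of `n` into an even number of pairwise-distinct parts. -/
def evenDistinctsCount (n : ℕ) : ℕ :=
  ((Nat.Partition.distincts n).filter fun p => Even p.parts.card).card

/-- The number of partitions of `n` into an odd number of pairwise-distinct parts. -/
def oddDistinctsCount (n : ℕ) : ℕ :=
  ((Nat.Partition.distincts n).filter fun p => Odd p.parts.card).card

open PowerSeries PowerSeries.WithPiTopology

theorem Finset.sum_neg_one_pow_eq_card_filter_even_sub_card_filter_odd {ι R : Type*} [Ring R]
    (s : Finset ι) (f : ι → ℕ) :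
    ∑ i ∈ s, (-1 : R) ^ f i = #{i ∈ s | Even (f i)} - #{i ∈ s | Odd (f i)} := by
  have h_even : ∑ i ∈ s with Even (f i), (-1 : R) ^ f i = #{i ∈ s | Even (f i)} := by
    rw [sum_congr rfl fun i hi ↦ Even.neg_one_pow (mem_filter.1 hi).2]
    simp
  have h_odd : ∑ i ∈ s with ¬Even (f i), (-1 : R) ^ f i = -#{i ∈ s | Odd (f i)} := by
    simp_rw [Nat.not_even_iff_odd]
    rw [sum_congr rfl fun i hi ↦ Odd.neg_one_pow (mem_filter.1 hi).2]
    simp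
  rw [← sum_filter_add_sum_filter_not s (fun i ↦ Even (f i)), h_even, h_odd, sub_eq_add_neg]

theorem evenDistinctsCount_sub_oddDistinctsCount (n : ℕ) :
    (evenDistinctsCount n : ℤ) - oddDistinctsCount n =
      ∑ p ∈ Nat.Partition.distincts n, (-1 : ℤ) ^ p.parts.card :=
  (sum_neg_one_pow_eq_card_filter_even_sub_card_filter_odd _ _).symm

namespace Nat.Partition

variable {R : Type*} [CommRing R]

theorem parts_toFinsupp_prod_ite_eq_one {n : ℕ} (p : n.Partition) :
    p.parts.toFinsupp.prod (fun _ c ↦ if c = 1 then (-1 : R) else 0) =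
      if p.parts.Nodup then (-1) ^ p.parts.card else 0 := by
  classical
  rw [Finsupp.prod, Multiset.toFinsupp_support]
  simp_rw [Multiset.toFinsupp_apply]
  split_ifs with hp
  · rw [prod_eq_pow_card (b := -1) fun i hi ↦ by
      simp [Multiset.count_eq_one_of_mem hp (Multiset.mem_toFinset.1 hi)],
      Multiset.toFinset_card_of_nodup hp]
  · obtain ⟨i, hi, hc⟩ : ∃ i ∈ p.parts, p.parts.count i ≠ 1 := by
      simpa [Multiset.nodup_iff_count_eq_one] using hp
    exact prod_eq_zero (Multiset.mem_toFinset.2 hi) (if_neg hc)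

theorem hasProd_powerSeriesMk_sum_distincts_neg_one_pow [TopologicalSpace R] [T2Space R] :
    HasProd (fun i ↦ (1 - X ^ (i + 1) : R⟦X⟧))
      (PowerSeries.mk fun n ↦ ∑ p ∈ distincts n, (-1 : R) ^ p.parts.card) := by
  convert! hasProd_genFun (fun _ c ↦ if c = 1 then (-1 : R) else 0) using 1
  · ext1 i
    rw [tsum_eq_single 0 fun j hj ↦ by simp [hj], sub_eq_add_neg]
    simp
  · ext n
    simp [parts_toFinsupp_prod_ite_eq_one, distincts, sum_filter]

theorem sum_distincts_neg_one_pow_eq_coeff_pentagonalSeries (n : ℕ) :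
    ∑ p ∈ distincts n, (-1 : R) ^ p.parts.card = (pentagonalSeries R).coeff n := by
  -- any Hausdorff topology on `R` serves to compare the two infinite products
  let : TopologicalSpace R := ⊥
  have : DiscreteTopology R := ⟨rfl⟩
  simpa using congr(coeff n $(hasProd_powerSeriesMk_sum_distincts_neg_one_pow.unique
    (hasProd_one_sub_X_pow R)))

end Nat.Partition

theorem pentagonal_natCast_eq_iff {j n : ℕ} (hj : 0 < j) :
    pentagonal j = n ↔ 2 * n = j * (3 * j - 1) := by
  have := two_mul_natCast_pentagonal j
  constructor
  · rintro rfl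
    zify [show 1 ≤ 3 * j by omega]
    exact this
  · intro h
    zify [show 1 ≤ 3 * j by omega] at h
    omega

theorem pentagonal_neg_natCast_eq_iff {j n : ℕ} :
    pentagonal (-j) = n ↔ 2 * n = j * (3 * j + 1) := by
  have := two_mul_natCast_pentagonal_neg j
  constructor
  · rintro rfl
    zify
    exact this
  · intro h
    zify at h
    omega

theorem mem_range_pentagonal_iff {n : ℕ} (hn : 0 < n) :
    n ∈ Set.range pentagonal ↔
      ∃ j : ℕ, 0 < j ∧ (2 * n = j * (3 * j - 1) ∨ 2 * n = j * (3 * j + 1)) := by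
  constructor
  · rintro ⟨k, rfl⟩
    obtain ⟨j, rfl | rfl⟩ := k.eq_nat_or_neg <;> obtain rfl | hj := j.eq_zero_or_pos
    · simp [pentagonal] at hn
    · exact ⟨j, hj, Or.inl ((pentagonal_natCast_eq_iff hj).1 rfl)⟩
    · simp [pentagonal] at hn
    · exact ⟨j, hj, Or.inr (pentagonal_neg_natCast_eq_iff.1 rfl)⟩
  · rintro ⟨j, hj, h | h⟩
    · exact ⟨j, (pentagonal_natCast_eq_iff hj).2 h⟩
    · exact ⟨-j, pentagonal_neg_natCast_eq_iff.2 h⟩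

theorem coeff_pentagonalSeries_eq_neg_one_pow {R : Type*} [CommRing R] {n j : ℕ} (hj : 0 < j)
    (h : 2 * n = j * (3 * j - 1) ∨ 2 * n = j * (3 * j + 1)) :
    (pentagonalSeries R).coeff n = (-1) ^ j := by
  rcases h with h | h
  · rw [← (pentagonal_natCast_eq_iff hj).2 h, coeff_pentagonalSeries_pentagonal, Int.coe_negOnePow]
    simp
  · rw [← pentagonal_neg_natCast_eq_iff.2 h, coeff_pentagonalSeries_pentagonal, Int.coe_negOnePow]
    simp

/-- Franklin's combinatorial form of the pentagonal number theorem. -/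
theorem franklin_pentagonal (n : ℕ) (hn : 0 < n) :
    (∀ j : ℕ, 0 < j → (2 * n = j * (3 * j - 1) ∨ 2 * n = j * (3 * j + 1)) →
        (evenDistinctsCount n : ℤ) - oddDistinctsCount n = (-1) ^ j) ∧
      ((¬ ∃ j : ℕ, 0 < j ∧ (2 * n = j * (3 * j - 1) ∨ 2 * n = j * (3 * j + 1))) →
        (evenDistinctsCount n : ℤ) - oddDistinctsCount n = 0) := by
  rw [evenDistinctsCount_sub_oddDistinctsCount,
    Nat.Partition.sum_distincts_neg_one_pow_eq_coeff_pentagonalSeries]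
  exact ⟨fun j hj h ↦ coeff_pentagonalSeries_eq_neg_one_pow hj h,
    fun h ↦ coeff_pentagonalSeries_eq_zero ℤ (mt (mem_range_pentagonal_iff hn).1 h)⟩
end

section
/- For every positive integer n, the absolute value of the difference between the number of partitions of n with an even number of parts and the number of partitions of n with an odd number of parts equals the number of partitions of n into distinct odd parts. -/
/-!
Weighting a partition by `(-1) ^ (number of parts)` turns its generating function into
`∏ 1 / (1 + X ^ i)`. By Euler's theorem `∏ (1 + X ^ i) = ∏_{i odd} 1 / (1 - X ^ i)`, so this
equals `∏_{i odd} (1 - X ^ i)`, the generating function of partitions into distinct odd parts,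
again weighted by `(-1) ^ (number of parts)`. The number of parts of a partition of `n` into odd
parts has the parity of `n`, so the signed count of all partitions of `n` is `(-1) ^ n` times the
number of partitions of `n` into distinct odd parts.
-/

open Finset PowerSeries
open scoped PowerSeries.WithPiTopology

lemma Multiset.toFinsupp_prod_pow {α M : Type*} [DecidableEq α] [CommMonoid M] (s : Multiset α)
    (a : M) : s.toFinsupp.prod (fun _ c => a ^ c) = a ^ card s := by
  rw [Finsupp.prod, prod_pow_eq_pow_sum, toFinsupp_support]
  simp_rw [toFinsupp_apply, toFinset_sum_count_eq]

lemma Multiset.neg_one_pow_card_of_forall_odd {M : Type*} [Monoid M] [HasDistribNeg M]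
    {s : Multiset ℕ} (hs : ∀ q ∈ s, Odd q) : (-1 : M) ^ card s = (-1) ^ s.sum := by
  induction s using Multiset.induction_on with
  | empty => simp
  | cons a s ih =>
    rw [forall_mem_cons] at hs
    rw [card_cons, sum_cons, pow_succ, pow_add, hs.1.neg_one_pow, ih hs.2, neg_one_mul, mul_neg_one]

lemma PowerSeries.WithPiTopology.one_add_tsum_neg_one_pow_smul_mul_one_add {R : Type*}
    [CommRing R] [TopologicalSpace R] [IsTopologicalRing R] [T2Space R] {f : R⟦X⟧}
    (hf : constantCoeff f = 0) :
    (1 + ∑' j, (-1 : R) ^ (j + 1) • f ^ (j + 1)) * (1 + f) = 1 := by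
  have hf' : constantCoeff (-f) = 0 := by simp [hf]
  have hgeom := tsum_pow_mul_one_sub_of_constantCoeff_eq_zero hf'
  rw [(summable_pow_of_constantCoeff_eq_zero hf').tsum_eq_zero_add, sub_neg_eq_add] at hgeom
  simpa [neg_pow f, smul_eq_C_mul] using hgeom

namespace Nat.Partition

lemma neg_one_pow_card_parts_of_mem_odds {M : Type*} [Monoid M] [HasDistribNeg M] {n : ℕ}
    {p : n.Partition} (hp : p ∈ odds n) : (-1 : M) ^ p.parts.card = (-1) ^ n := by
  rw [Multiset.neg_one_pow_card_of_forall_odd, p.parts_sum]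
  exact fun q hq => Nat.not_even_iff_odd.mp ((mem_filter.mp hp).2 q hq)

lemma sum_neg_one_pow_card_parts_eq_card_sub_card (n : ℕ) :
    ∑ p : n.Partition, (-1 : ℤ) ^ p.parts.card =
      #{p : n.Partition | Even p.parts.card} - #{p : n.Partition | Odd p.parts.card} := by
  simp_rw [neg_one_pow_eq_ite, sum_ite, sum_const, ← Nat.not_even_iff_odd]
  simp [sub_eq_add_neg]

lemma toFinsupp_prod_ite_not_even_and_lt_two {R : Type*} [CommRing R] {n : ℕ} (p : n.Partition) :
    p.parts.toFinsupp.prod (fun i c => if ¬Even i ∧ c < 2 then (1 : R) else 0) =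
      if p ∈ oddDistincts n then 1 else 0 := by
  simp_rw [Finsupp.prod, prod_boole, Multiset.toFinsupp_support, Multiset.toFinsupp_apply,
    oddDistincts, ← countRestricted_two, odds, restricted, countRestricted, mem_inter, mem_filter,
    Multiset.mem_toFinset, forall_and]
  simp

section GenFun

variable {R : Type*} [CommRing R]

lemma coeff_genFun_neg_one_pow (n : ℕ) :
    (genFun fun _ c => (-1 : R) ^ c).coeff n = ∑ p : n.Partition, (-1) ^ p.parts.card := by
  simp_rw [coeff_genFun, Multiset.toFinsupp_prod_pow]

lemma coeff_genFun_neg_one_pow_mul_ite_not_even_and_lt_two (n : ℕ) :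
    (genFun fun i c => (-1 : R) ^ c * if ¬Even i ∧ c < 2 then 1 else 0).coeff n =
      ∑ p ∈ oddDistincts n, (-1) ^ p.parts.card := by
  simp_rw [coeff_genFun, Finsupp.prod_mul, Multiset.toFinsupp_prod_pow,
    toFinsupp_prod_ite_not_even_and_lt_two, mul_ite, mul_one, mul_zero, sum_ite_mem, univ_inter]

section Topology

variable [TopologicalSpace R] [IsTopologicalRing R] [T2Space R]

lemma genFun_neg_one_pow_mul_powerSeriesMk_card_distincts :
    genFun (fun _ c => (-1 : R) ^ c) * PowerSeries.mk (fun n => (#(distincts n) : R)) = 1 := by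
  have hfactor (i : ℕ) :
      (1 + ∑' j, (-1 : R) ^ (j + 1) • (X : R⟦X⟧) ^ ((i + 1) * (j + 1))) *
        ∑ j ∈ range 2, X ^ ((i + 1) * j) = 1 := by
    simp_rw [pow_mul]
    simpa [sum_range_succ, add_comm] using
      WithPiTopology.one_add_tsum_neg_one_pow_smul_mul_one_add (f := (X : R⟦X⟧) ^ (i + 1))
        (by simp)
  have hdistincts := hasProd_powerSeriesMk_card_countRestricted R two_pos
  simp_rw [countRestricted_two] at hdistincts
  exact ((hasProd_genFun _).mul hdistincts).unique (by simp [hfactor])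

lemma powerSeriesMk_card_odds_mul_genFun_neg_one_pow_mul_ite_not_even_and_lt_two :
    PowerSeries.mk (fun n => (#(odds n) : R)) *
      genFun (fun i c => (-1 : R) ^ c * if ¬Even i ∧ c < 2 then 1 else 0) = 1 := by
  have hfactor (i : ℕ) :
      (1 + ∑' j, ((-1 : R) ^ (j + 1) * if ¬Even (i + 1) ∧ j + 1 < 2 then 1 else 0) •
        (X : R⟦X⟧) ^ ((i + 1) * (j + 1))) = if ¬Even (i + 1) then 1 - X ^ (i + 1) else 1 := by
    rw [tsum_eq_single 0 fun j hj => by simp [hj]]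
    by_cases hi : Even (i + 1) <;> simp [hi, sub_eq_add_neg]
  have hinv (i : ℕ) : (if ¬Even (i + 1) then ∑' j, (X : R⟦X⟧) ^ ((i + 1) * j) else 1) *
      (if ¬Even (i + 1) then 1 - X ^ (i + 1) else 1) = 1 := by
    by_cases hi : Even (i + 1)
    · simp [hi]
    · simp_rw [if_pos hi, pow_mul]
      exact WithPiTopology.tsum_pow_mul_one_sub_of_constantCoeff_eq_zero (by simp)
  refine ((hasProd_powerSeriesMk_card_restricted R _).mul (hasProd_genFun _)).unique ?_
  simpa only [hfactor, hinv] using hasProd_one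

end Topology

theorem genFun_neg_one_pow_eq_genFun_neg_one_pow_mul_ite_not_even_and_lt_two :
    genFun (fun _ c => (-1 : R) ^ c) =
      genFun (fun i c => (-1 : R) ^ c * if ¬Even i ∧ c < 2 then 1 else 0) := by
  -- the identity is algebraic, so any T2 topological ring structure on `R` will do
  let _ : TopologicalSpace R := ⊥
  have _ : DiscreteTopology R := ⟨rfl⟩
  calc genFun (fun _ c => (-1 : R) ^ c)
      = genFun (fun _ c => (-1 : R) ^ c) * (PowerSeries.mk (fun n => (#(odds n) : R)) *
          genFun (fun i c => (-1 : R) ^ c * if ¬Even i ∧ c < 2 then 1 else 0)) := by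
        rw [powerSeriesMk_card_odds_mul_genFun_neg_one_pow_mul_ite_not_even_and_lt_two, mul_one]
    _ = genFun (fun i c => (-1 : R) ^ c * if ¬Even i ∧ c < 2 then 1 else 0) := by
        simp_rw [card_odds_eq_card_distincts, ← mul_assoc,
          genFun_neg_one_pow_mul_powerSeriesMk_card_distincts, one_mul]

theorem sum_neg_one_pow_card_parts (n : ℕ) :
    ∑ p : n.Partition, (-1 : R) ^ p.parts.card = (-1) ^ n * #(oddDistincts n) := by
  rw [← coeff_genFun_neg_one_pow,
    genFun_neg_one_pow_eq_genFun_neg_one_pow_mul_ite_not_even_and_lt_two,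
    coeff_genFun_neg_one_pow_mul_ite_not_even_and_lt_two,
    sum_congr rfl fun p (hp : p ∈ oddDistincts n) =>
      neg_one_pow_card_parts_of_mem_odds (mem_of_mem_inter_left hp), sum_const,
    nsmul_eq_mul, mul_comm]

end GenFun

end Nat.Partition

theorem abs_even_sub_odd_parts_eq_card_oddDistincts_general (n : ℕ) :
    (((Finset.univ.filter fun p : Nat.Partition n => Even p.parts.card).card : ℤ)
        - ((Finset.univ.filter fun p : Nat.Partition n => Odd p.parts.card).card : ℤ)).natAbs
      = (Nat.Partition.oddDistincts n).card := by
  rw [← Nat.Partition.sum_neg_one_pow_card_parts_eq_card_sub_card,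
    Nat.Partition.sum_neg_one_pow_card_parts, Int.natAbs_mul, Int.natAbs_pow, Int.natAbs_neg,
    Int.natAbs_one, one_pow, one_mul, Int.natAbs_natCast]

/-- The absolute value of the difference between the number of partitions of `n` with an
even number of parts and those with an odd number of parts equals the number of partitions
of `n` into distinct odd parts. -/
theorem abs_even_sub_odd_parts_eq_card_oddDistincts (n : ℕ) (hn : 0 < n) :
    (((Finset.univ.filter fun p : Nat.Partition n => Even p.parts.card).card : ℤ)
        - ((Finset.univ.filter fun p : Nat.Partition n => Odd p.parts.card).card : ℤ)).natAbs
      = (Nat.Partition.oddDistincts n).card :=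
  abs_even_sub_odd_parts_eq_card_oddDistincts_general n
end

section
/- For |z| < 1, ∏_{k=1}^∞ (1−z^k)³ = Σ_{k=0}^∞ (−1)^k (2k+1) z^{k(k+1)/2}. -/
/-!
Write `(q;q)_n` for `qPochhammer q n` and `[m, j]_q` for `qBinomial q m j`. The `q`-binomial
theorem `∏_{i<m} (x + t q^i) = ∑_j q^(j choose 2) [m, j]_q t^j x^(m-j)`, taken with `m = 2n+1`,
`x = q^n`, `t = -w`, gives after pairing the terms `j = n - l` and `j = n + 1 + l` (using the
symmetry of the Gaussian binomials) the finite triple product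
`∏_{i<n} (q^(i+1) - w) ∏_{i≤n} (1 - w q^i)`
  `= ∑_{l≤n} q^(l(l+1)/2) [2n+1, n+1+l]_q ((-w)^(n-l) + (-w)^(n+1+l))`.
Both sides are divisible by `1 - w`; dividing and setting `w = 1` gives the finite Jacobi identity
`(q;q)_n² = ∑_{l≤n} (-1)^l (2l+1) q^(l(l+1)/2) [2n+1, n+1+l]_q`, valid in every commutative ring.
For `‖q‖ < 1` the Gaussian binomials are uniformly bounded and `[2n+1, n+1+l]_q → 1/(q;q)_∞`, so
dominated convergence turns this into `(q;q)_∞² = (q;q)_∞⁻¹ ∑_l (-1)^l (2l+1) q^(l(l+1)/2)`.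
-/

open Filter Finset Topology

variable {R S F : Type*}

section CommSemiring

variable [CommSemiring R]

def qBinomial (q : R) : ℕ → ℕ → R
  | _, 0 => 1
  | 0, _ + 1 => 0
  | m + 1, j + 1 => qBinomial q m j + q ^ (j + 1) * qBinomial q m (j + 1)

variable (q : R)

@[simp]
theorem qBinomial_zero_right (m : ℕ) : qBinomial q m 0 = 1 := by
  cases m <;> rfl

theorem qBinomial_succ_succ (m j : ℕ) :
    qBinomial q (m + 1) (j + 1) = qBinomial q m j + q ^ (j + 1) * qBinomial q m (j + 1) := rfl

theorem qBinomial_eq_zero_of_lt {m j : ℕ} (h : m < j) : qBinomial q m j = 0 := by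
  induction m generalizing j with
  | zero => obtain ⟨j, rfl⟩ := Nat.exists_eq_add_one.2 h; rfl
  | succ m ih =>
    obtain ⟨j, rfl⟩ := Nat.exists_eq_add_one.2 (Nat.zero_lt_of_lt h)
    rw [qBinomial_succ_succ, ih (by omega), ih (by omega), mul_zero, add_zero]

theorem qBinomial_self (m : ℕ) : qBinomial q m m = 1 := by
  induction m with
  | zero => rfl
  | succ m ih =>
    rw [qBinomial_succ_succ, ih, qBinomial_eq_zero_of_lt q m.lt_succ_self, mul_zero, add_zero]

theorem prod_range_add_mul_pow_eq_sum_qBinomial (x t : R) (m : ℕ) :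
    ∏ i ∈ range m, (x + t * q ^ i) =
      ∑ j ∈ range (m + 1), q ^ j.choose 2 * qBinomial q m j * t ^ j * x ^ (m - j) := by
  induction m generalizing t with
  | zero => simp
  | succ m ih =>
    set a : ℕ → R := fun j => q ^ j.choose 2 * qBinomial q m j * (t * q) ^ j * x ^ (m - j)
    have hx : x * ∑ j ∈ range (m + 1), a j = x ^ (m + 1) + ∑ j ∈ range (m + 1),
        q ^ (j + 1).choose 2 * (q ^ (j + 1) * qBinomial q m (j + 1)) * t ^ (j + 1) *
          x ^ (m - j) := by
      rw [mul_sum, sum_range_succ', sum_range_succ, qBinomial_eq_zero_of_lt q m.lt_succ_self]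
      simp only [a, mul_zero, zero_mul, add_zero, Nat.choose_zero_succ, pow_zero,
        qBinomial_zero_right, Nat.sub_zero, mul_one, one_mul, ← pow_succ', add_comm (x ^ (m + 1))]
      refine congrArg₂ _ (sum_congr rfl fun j hj => ?_) rfl
      rw [show m - j = m - (j + 1) + 1 by grind, pow_succ]
      ring
    have ht : t * ∑ j ∈ range (m + 1), a j = ∑ j ∈ range (m + 1),
        q ^ (j + 1).choose 2 * qBinomial q m j * t ^ (j + 1) * x ^ (m - j) := by
      rw [mul_sum]
      refine sum_congr rfl fun j _ => ?_
      rw [Nat.choose_succ_succ', Nat.choose_one_right, pow_add]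
      ring
    have hprod : ∏ i ∈ range m, (x + t * q ^ (i + 1)) = ∑ j ∈ range (m + 1), a j := by
      rw [← ih]
      simp only [pow_succ', mul_assoc]
    rw [prod_range_succ', hprod, sum_range_succ' _ (m + 1), pow_zero, mul_one, mul_add,
      mul_comm _ x, mul_comm _ t, hx, ht]
    simp only [qBinomial_succ_succ, Nat.add_sub_add_right, mul_add, add_mul, sum_add_distrib,
      Nat.choose_zero_succ, pow_zero, qBinomial_zero_right, mul_one, tsub_zero, one_mul]
    ring

theorem map_qBinomial [CommSemiring S] [FunLike F R S] [RingHomClass F R S] (f : F) (m j : ℕ) :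
    f (qBinomial q m j) = qBinomial (f q) m j := by
  induction m generalizing j with
  | zero => cases j <;> simp [qBinomial]
  | succ m ih => cases j <;> simp [qBinomial_succ_succ, ih]

end CommSemiring

section CommRing

variable [CommRing R] (q : R)

def qPochhammer (m : ℕ) : R := ∏ i ∈ range m, (1 - q ^ (i + 1))

theorem qPochhammer_succ (m : ℕ) : qPochhammer q (m + 1) = qPochhammer q m * (1 - q ^ (m + 1)) :=
  prod_range_succ _ m

theorem map_qPochhammer [CommRing S] [FunLike F R S] [RingHomClass F R S] (f : F) (m : ℕ) :
    f (qPochhammer q m) = qPochhammer (f q) m := by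
  simp [qPochhammer]

theorem qBinomial_add_mul_qPochhammer_mul (a b : ℕ) :
    qBinomial q (a + b) a * qPochhammer q a * qPochhammer q b = qPochhammer q (a + b) := by
  induction a generalizing b with
  | zero => simp [qPochhammer]
  | succ a iha =>
    induction b with
    | zero => simp [qBinomial_self, qPochhammer]
    | succ b ihb =>
      have h := iha (b + 1)
      rw [show a + (b + 1) = a + 1 + b by omega, qPochhammer_succ q b] at h
      rw [qPochhammer_succ q a] at ihb
      rw [show a + 1 + (b + 1) = a + 1 + b + 1 by omega, qBinomial_succ_succ,
        qPochhammer_succ q (a + 1 + b), qPochhammer_succ q a, qPochhammer_succ q b]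
      linear_combination (1 - q ^ (a + 1)) * h + q ^ (a + 1) * (1 - q ^ (b + 1)) * ihb

theorem qBinomial_add_symm [IsDomain R] {a b : ℕ} (h : qPochhammer q (a + b) ≠ 0) :
    qBinomial q (a + b) a = qBinomial q (a + b) b := by
  have hab := qBinomial_add_mul_qPochhammer_mul q a b
  have hba := qBinomial_add_mul_qPochhammer_mul q b a
  rw [add_comm b a] at hba
  have hP : qPochhammer q a * qPochhammer q b ≠ 0 := by
    rintro h0
    rw [mul_assoc, h0, mul_zero] at hab
    exact h hab.symm
  apply mul_right_cancel₀ hP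
  linear_combination hab - hba

end CommRing

section TripleProduct

variable [CommRing R]
open Polynomial

theorem prod_range_pow_add_neg_mul_pow (q w : R) (n : ℕ) :
    ∏ i ∈ range (2 * n + 1), (q ^ n + -w * q ^ i) = q ^ (n.choose 2 + n * (n + 1)) *
      ((∏ i ∈ range n, (q ^ (i + 1) - w)) * ∏ i ∈ range (n + 1), (1 - w * q ^ i)) := by
  have hlow : ∏ i ∈ range n, (q ^ n + -w * q ^ i) =
      q ^ n.choose 2 * ∏ i ∈ range n, (q ^ (i + 1) - w) := by
    rw [← prod_range_reflect (fun i => q ^ (i + 1) - w), Nat.choose_two_right, ← sum_range_id,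
      ← prod_pow_eq_pow_sum, ← prod_mul_distrib]
    refine prod_congr rfl fun i hi => ?_
    rw [show n - 1 - i + 1 = n - i by grind, mul_sub, ← pow_add, Nat.add_sub_cancel' (by grind)]
    ring
  have hhigh : ∏ i ∈ range (n + 1), (q ^ n + -w * q ^ (n + i)) =
      q ^ (n * (n + 1)) * ∏ i ∈ range (n + 1), (1 - w * q ^ i) := by
    rw [pow_mul, pow_eq_prod_const (q ^ n), ← prod_mul_distrib]
    refine prod_congr rfl fun i _ => ?_
    rw [pow_add]
    ring
  rw [show 2 * n + 1 = n + (n + 1) by ring, prod_range_add, hlow, hhigh, pow_add]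
  ring

theorem sum_qBinomial_odd_eq_sum_pairs [IsDomain R] {q : R} {n : ℕ}
    (hP : qPochhammer q (2 * n + 1) ≠ 0) (w : R) :
    ∑ j ∈ range (2 * n + 1 + 1),
      q ^ j.choose 2 * qBinomial q (2 * n + 1) j * (-w) ^ j * (q ^ n) ^ (2 * n + 1 - j) =
      q ^ (n.choose 2 + n * (n + 1)) * ∑ l ∈ range (n + 1), q ^ (l + 1).choose 2 *
        qBinomial q (2 * n + 1) (n + 1 + l) * ((-w) ^ (n - l) + (-w) ^ (n + 1 + l)) := by
  rw [show 2 * n + 1 + 1 = (n + 1) + (n + 1) by ring, sum_range_add, ← sum_range_reflect,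
    ← sum_add_distrib, mul_sum]
  refine sum_congr rfl fun l hl => ?_
  have hl : l ≤ n := Nat.lt_succ_iff.1 (mem_range.1 hl)
  have hsymm : qBinomial q (2 * n + 1) (n - l) = qBinomial q (2 * n + 1) (n + 1 + l) := by
    have hsplit : n + 1 + l + (n - l) = 2 * n + 1 := by omega
    rw [← hsplit] at hP ⊢
    exact (qBinomial_add_symm q hP).symm
  have e₁ : q ^ (n - l).choose 2 * (q ^ n) ^ (2 * n + 1 - (n - l)) =
      q ^ (n.choose 2 + n * (n + 1)) * q ^ (l + 1).choose 2 := by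
    rw [← pow_mul, ← pow_add, ← pow_add]
    congr 1
    obtain ⟨a, rfl⟩ := Nat.exists_eq_add_of_le hl
    rw [Nat.add_sub_cancel_left, show 2 * (l + a) + 1 - a = 2 * l + a + 1 by omega]
    apply Nat.cast_injective (R := ℚ)
    push_cast [Nat.cast_choose_two]
    ring
  have e₂ : q ^ (n + 1 + l).choose 2 * (q ^ n) ^ (2 * n + 1 - (n + 1 + l)) =
      q ^ (n.choose 2 + n * (n + 1)) * q ^ (l + 1).choose 2 := by
    rw [← pow_mul, ← pow_add, ← pow_add]
    congr 1
    obtain ⟨a, rfl⟩ := Nat.exists_eq_add_of_le hl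
    rw [show 2 * (l + a) + 1 - (l + a + 1 + l) = a by omega]
    apply Nat.cast_injective (R := ℚ)
    push_cast [Nat.cast_choose_two]
    ring
  rw [show n + 1 - 1 - l = n - l by omega, hsymm]
  linear_combination qBinomial q (2 * n + 1) (n + 1 + l) *
    ((-w) ^ (n - l) * e₁ + (-w) ^ (n + 1 + l) * e₂)

theorem finite_triple_product [IsDomain R] {q : R} (hq : q ≠ 0) {n : ℕ}
    (hP : qPochhammer q (2 * n + 1) ≠ 0) (w : R) :
    (∏ i ∈ range n, (q ^ (i + 1) - w)) * ∏ i ∈ range (n + 1), (1 - w * q ^ i) =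
      ∑ l ∈ range (n + 1), q ^ (l + 1).choose 2 * qBinomial q (2 * n + 1) (n + 1 + l) *
        ((-w) ^ (n - l) + (-w) ^ (n + 1 + l)) := by
  apply mul_left_cancel₀ (pow_ne_zero (n.choose 2 + n * (n + 1)) hq)
  rw [← prod_range_pow_add_neg_mul_pow, ← sum_qBinomial_odd_eq_sum_pairs hP,
    prod_range_add_mul_pow_eq_sum_qBinomial]

theorem finite_triple_product_div_one_sub_X [IsDomain R] {q : R} (hq : q ≠ 0) {n : ℕ}
    (hP : qPochhammer q (2 * n + 1) ≠ 0) :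
    (∏ i ∈ range n, (C q ^ (i + 1) - X)) * ∏ i ∈ range n, (1 - X * C q ^ (i + 1)) =
      ∑ l ∈ range (n + 1), C (q ^ (l + 1).choose 2 * qBinomial q (2 * n + 1) (n + 1 + l)) *
        ((-X) ^ (n - l) * ∑ i ∈ range (2 * l + 1), X ^ i) := by
  have h := finite_triple_product (q := C q) (C_ne_zero.2 hq)
    (by rwa [← map_qPochhammer, Ne, C_eq_zero]) X
  have hfactor : ∀ l ∈ range (n + 1), (-X : R[X]) ^ (n - l) + (-X) ^ (n + 1 + l) =
      (1 - X) * ((-X) ^ (n - l) * ∑ i ∈ range (2 * l + 1), X ^ i) := by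
    intro l hl
    rw [mul_left_comm, mul_neg_geom_sum, show n + 1 + l = (n - l) + (2 * l + 1) by grind,
      pow_add, (odd_two_mul_add_one l).neg_pow]
    ring
  rw [sum_congr rfl fun l hl => by rw [hfactor l hl], prod_range_succ', pow_zero, mul_one] at h
  have h1X : (1 - X : R[X]) ≠ 0 := fun h0 => by simpa using congrArg (eval 0) h0
  apply mul_left_cancel₀ h1X
  rw [mul_sum]
  convert h using 1
  · ring
  · refine sum_congr rfl fun l _ => ?_
    rw [map_mul, map_pow, map_qBinomial]
    ring

theorem qPochhammer_sq_eq_sum_of_ne_zero [IsDomain R] {q : R} (hq : q ≠ 0) {n : ℕ}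
    (hP : qPochhammer q (2 * n + 1) ≠ 0) :
    qPochhammer q n ^ 2 = ∑ l ∈ range (n + 1),
      (-1) ^ l * (2 * l + 1) * q ^ (l + 1).choose 2 * qBinomial q (2 * n + 1) (n + 1 + l) := by
  have h := congrArg (eval 1) (finite_triple_product_div_one_sub_X hq hP)
  simp only [eval_mul, eval_prod, eval_finsetSum, eval_sub, eval_pow, eval_neg, eval_one, eval_C,
    eval_X, one_pow, one_mul, sum_const, card_range, nsmul_one] at h
  have hneg : ∏ i ∈ range n, (q ^ (i + 1) - 1) = (-1) ^ n * qPochhammer q n := by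
    simp_rw [← neg_sub (1 : R), prod_neg, card_range, qPochhammer]
  rw [hneg, show ∏ i ∈ range n, (1 - q ^ (i + 1)) = qPochhammer q n from rfl] at h
  calc qPochhammer q n ^ 2 = (-1) ^ n * ((-1) ^ n * qPochhammer q n * qPochhammer q n) := by
        rw [← mul_assoc, ← mul_assoc, ← mul_pow, neg_one_mul, neg_neg, one_pow, one_mul, sq]
    _ = _ := by
        rw [h, mul_sum]
        refine sum_congr rfl fun l hl => ?_
        have hsign : (-1 : R) ^ n * (-1) ^ (n - l) = (-1) ^ l := by
          rw [← pow_add, show n + (n - l) = 2 * (n - l) + l by grind, pow_add, pow_mul,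
            neg_one_sq, one_pow, one_mul]
        push_cast
        linear_combination
          (2 * l + 1) * q ^ (l + 1).choose 2 * qBinomial q (2 * n + 1) (n + 1 + l) * hsign

theorem qPochhammer_sq_eq_sum (q : R) (n : ℕ) :
    qPochhammer q n ^ 2 = ∑ l ∈ range (n + 1),
      (-1) ^ l * (2 * l + 1) * q ^ (l + 1).choose 2 * qBinomial q (2 * n + 1) (n + 1 + l) := by
  have hP : qPochhammer (X : ℤ[X]) (2 * n + 1) ≠ 0 :=
    prod_ne_zero_iff.2 fun i _ h0 => by simpa using congrArg (eval 0) h0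
  simpa [map_qPochhammer, map_qBinomial, map_ofNat] using
    congrArg (aeval q) (qPochhammer_sq_eq_sum_of_ne_zero X_ne_zero hP)

end TripleProduct

theorem qBinomial_add_eq_div {K : Type*} [Field K] {q : K} {a b : ℕ} (ha : qPochhammer q a ≠ 0)
    (hb : qPochhammer q b ≠ 0) :
    qBinomial q (a + b) a = qPochhammer q (a + b) / (qPochhammer q a * qPochhammer q b) := by
  rw [eq_div_iff (mul_ne_zero ha hb), ← mul_assoc, qBinomial_add_mul_qPochhammer_mul]

section Analytic

variable {𝕜 : Type*} [NormedField 𝕜] {q : 𝕜}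

theorem summable_norm_neg_pow_succ (hq : ‖q‖ < 1) : Summable fun i : ℕ => ‖-q ^ (i + 1)‖ := by
  simpa using (summable_nat_add_iff 1).2 (summable_geometric_of_lt_one (norm_nonneg q) hq)

theorem one_sub_pow_succ_ne_zero (hq : ‖q‖ < 1) (i : ℕ) : 1 - q ^ (i + 1) ≠ 0 := by
  refine sub_ne_zero.2 fun h => ?_
  have : ‖q ^ (i + 1)‖ < 1 := by rw [norm_pow]; exact pow_lt_one₀ (norm_nonneg q) hq i.succ_ne_zero
  rw [← h, norm_one] at this
  exact this.false

theorem qPochhammer_ne_zero (hq : ‖q‖ < 1) (m : ℕ) : qPochhammer q m ≠ 0 :=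
  prod_ne_zero_iff.2 fun i _ => one_sub_pow_succ_ne_zero hq i

variable [CompleteSpace 𝕜]

theorem tprod_one_sub_pow_succ_ne_zero (hq : ‖q‖ < 1) : ∏' i : ℕ, (1 - q ^ (i + 1)) ≠ 0 := by
  simpa [sub_eq_add_neg] using tprod_one_add_ne_zero_of_summable (f := fun i => -q ^ (i + 1))
    (by simpa [← sub_eq_add_neg] using one_sub_pow_succ_ne_zero hq) (summable_norm_neg_pow_succ hq)

theorem tendsto_qPochhammer (hq : ‖q‖ < 1) :
    Tendsto (qPochhammer q) atTop (𝓝 (∏' i : ℕ, (1 - q ^ (i + 1)))) := by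
  have h : Multipliable fun i : ℕ => 1 - q ^ (i + 1) := by
    simpa only [sub_eq_add_neg] using
      multipliable_one_add_of_summable (f := fun i : ℕ => -q ^ (i + 1))
        (summable_norm_neg_pow_succ hq)
  exact h.hasProd.tendsto_prod_nat

theorem exists_norm_qBinomial_le (hq : ‖q‖ < 1) : ∃ C, ∀ m j, ‖qBinomial q m j‖ ≤ C := by
  have hP := tendsto_qPochhammer hq
  obtain ⟨A, hA⟩ := isBounded_iff_forall_norm_le.1 (Metric.isBounded_range_of_tendsto _ hP)
  obtain ⟨B, hB⟩ := isBounded_iff_forall_norm_le.1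
    (Metric.isBounded_range_of_tendsto _ (hP.inv₀ (tprod_one_sub_pow_succ_ne_zero hq)))
  have hA' (m : ℕ) : ‖qPochhammer q m‖ ≤ A := hA _ ⟨m, rfl⟩
  have hB' (m : ℕ) : ‖(qPochhammer q m)⁻¹‖ ≤ B := hB _ ⟨m, rfl⟩
  have hA0 : 0 ≤ A := (norm_nonneg _).trans (hA' 0)
  have hB0 : 0 ≤ B := (norm_nonneg _).trans (hB' 0)
  refine ⟨A * B * B, fun m j => ?_⟩
  rcases lt_or_ge m j with h | h
  · rw [qBinomial_eq_zero_of_lt q h, norm_zero]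
    positivity
  · obtain ⟨b, rfl⟩ := Nat.exists_eq_add_of_le h
    rw [qBinomial_add_eq_div (qPochhammer_ne_zero hq j) (qPochhammer_ne_zero hq b), div_eq_mul_inv,
      mul_inv, ← mul_assoc, norm_mul, norm_mul]
    gcongr
    exacts [hA' _, hB' _, hB' _]

theorem tendsto_qBinomial {ι : Type*} {l : Filter ι} (hq : ‖q‖ < 1) {a b : ι → ℕ}
    (ha : Tendsto a l atTop) (hb : Tendsto b l atTop) :
    Tendsto (fun i => qBinomial q (a i + b i) (a i)) l (𝓝 (∏' i : ℕ, (1 - q ^ (i + 1)))⁻¹) := by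
  have hE := tprod_one_sub_pow_succ_ne_zero hq
  have hP := tendsto_qPochhammer hq
  have h := (hP.comp (ha.atTop_add_atTop hb)).div ((hP.comp ha).mul (hP.comp hb))
    (mul_ne_zero hE hE)
  rw [div_mul_cancel_left₀ hE] at h
  refine h.congr fun i => ?_
  exact (qBinomial_add_eq_div (qPochhammer_ne_zero hq _) (qPochhammer_ne_zero hq _)).symm

theorem tprod_one_sub_pow_succ_sq_eq_tsum (hq : ‖q‖ < 1) :
    (∏' i : ℕ, (1 - q ^ (i + 1))) ^ 2 = ∑' l : ℕ,
      (-1) ^ l * (2 * l + 1) * q ^ (l + 1).choose 2 * (∏' i : ℕ, (1 - q ^ (i + 1)))⁻¹ := by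
  set f : ℕ → ℕ → 𝕜 := fun n l =>
    (-1) ^ l * (2 * l + 1) * q ^ (l + 1).choose 2 * qBinomial q (2 * n + 1) (n + 1 + l)
  have hsum (n : ℕ) : ∑' l, f n l = qPochhammer q n ^ 2 := by
    rw [qPochhammer_sq_eq_sum, tsum_eq_sum fun l hl => ?_]
    have hl : 2 * n + 1 < n + 1 + l := by grind
    simp only [f, qBinomial_eq_zero_of_lt q hl, mul_zero]
  have hlim (l : ℕ) : Tendsto (f · l) atTop
      (𝓝 ((-1) ^ l * (2 * l + 1) * q ^ (l + 1).choose 2 * (∏' i : ℕ, (1 - q ^ (i + 1)))⁻¹)) := by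
    have h := tendsto_qBinomial hq (tendsto_add_atTop_nat (l + 1)) (tendsto_sub_atTop_nat l)
    refine (h.const_mul _).congr' ?_
    filter_upwards [eventually_ge_atTop l] with n hn
    rw [show n + (l + 1) + (n - l) = 2 * n + 1 by omega, show n + (l + 1) = n + 1 + l by omega]
  obtain ⟨C, hC⟩ := exists_norm_qBinomial_le hq
  have hbound : ∀ n l, ‖f n l‖ ≤ C * ((2 * l + 1) * ‖q‖ ^ l) := by
    intro n l
    have h2l : ‖(2 * l + 1 : 𝕜)‖ ≤ 2 * l + 1 := by
      simpa using Nat.norm_cast_le (α := 𝕜) (2 * l + 1)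
    have hql : ‖q‖ ^ (l + 1).choose 2 ≤ ‖q‖ ^ l := by
      refine pow_le_pow_of_le_one (norm_nonneg q) hq.le ?_
      rw [Nat.choose_succ_succ', Nat.choose_one_right]
      exact Nat.le_add_right l _
    simp only [f, norm_mul, norm_pow, norm_neg, norm_one, one_pow, one_mul]
    calc ‖(2 * l + 1 : 𝕜)‖ * ‖q‖ ^ (l + 1).choose 2 * ‖qBinomial q (2 * n + 1) (n + 1 + l)‖
        ≤ (2 * l + 1) * ‖q‖ ^ l * C := by gcongr; exact hC _ _
      _ = C * ((2 * l + 1) * ‖q‖ ^ l) := by ring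
  have hsummable : Summable fun l : ℕ => C * ((2 * l + 1) * ‖q‖ ^ l) := by
    have hq' : ‖‖q‖‖ < 1 := by rwa [norm_norm]
    refine ((((summable_pow_mul_geometric_of_norm_lt_one 1 hq').mul_left 2).add
      (summable_geometric_of_lt_one (norm_nonneg q) hq)).mul_left C).congr fun l => ?_
    ring
  refine tendsto_nhds_unique ((tendsto_qPochhammer hq).pow 2) ?_
  simp_rw [← hsum]
  exact tendsto_tsum_of_dominated_convergence hsummable hlim (Eventually.of_forall hbound)

theorem tprod_one_sub_pow_succ_pow_three_eq_tsum (hq : ‖q‖ < 1) :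
    (∏' i : ℕ, (1 - q ^ (i + 1))) ^ 3 =
      ∑' k : ℕ, (-1) ^ k * (2 * k + 1) * q ^ (k * (k + 1) / 2) := by
  have htri (k : ℕ) : (k + 1).choose 2 = k * (k + 1) / 2 := by
    rw [Nat.choose_two_right, Nat.add_sub_cancel, mul_comm]
  rw [pow_succ, tprod_one_sub_pow_succ_sq_eq_tsum hq, tsum_mul_right,
    inv_mul_cancel_right₀ (tprod_one_sub_pow_succ_ne_zero hq)]
  simp_rw [htri]

end Analytic

/-- Jacobi's identity: for `|z| < 1`,
`∏_{k=1}^∞ (1 - z^k)³ = ∑_{k=0}^∞ (-1)^k (2k+1) z^{k(k+1)/2}`. -/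
theorem jacobi_cube_identity (z : ℂ) (hz : ‖z‖ < 1) :
    Tendsto (fun n => ∏ m ∈ range n, (1 - z ^ (m + 1)) ^ 3) atTop
      (nhds (∑' k : ℕ, (-1 : ℂ) ^ k * (2 * k + 1) * z ^ (k * (k + 1) / 2))) := by
  rw [← tprod_one_sub_pow_succ_pow_three_eq_tsum hz]
  simpa only [qPochhammer, prod_pow] using (tendsto_qPochhammer hz).pow 3
end

section
/- For |z| < 1, Σ_{k=0}^∞ z^{k(k+1)/2} = ∏_{k=1}^∞ (1−z^{2k})/(1−z^{2k−1}). -/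
/-!
Write `F(x) = ∑_j x^j (x; z²)_j / (xz; z²)_j`. The `n`-th partial product of the right-hand side
is `1 + z ∑_{j<n} (j-th term of F(z²))`, so the product converges to `1 + z F(z²)`.
The terms of `F` telescope to the functional equation `F(x) = 1 + x + z x² F(x z²)`.
At `x = z^(2n+2)`, with `T(k) = k(k+1)/2`, it peels `z^T(2n+1) + z^T(2n+2)` off
`z^T(2n+1) F(z^(2n+2))`, and this remainder tends to `0` because `‖F(x)‖ ≤ 2` for `‖x‖ ≤ 1/4`.
Hence also `∑_k z^T(k) = 1 + z F(z²)`.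
-/

open Filter Finset Topology

section GaussSeries

variable {𝕜 : Type*} [NormedField 𝕜] {z x : 𝕜}

lemma one_sub_ne_zero_of_norm_lt_one {w : 𝕜} (hw : ‖w‖ < 1) : 1 - w ≠ 0 := by
  rw [sub_ne_zero]
  rintro rfl
  simp at hw

lemma norm_mul_pow_le (hz : ‖z‖ ≤ 1) (m : ℕ) : ‖x * z ^ m‖ ≤ ‖x‖ := by
  rw [norm_mul, norm_pow]
  exact mul_le_of_le_one_right (norm_nonneg x) (pow_le_one₀ (norm_nonneg z) hz)

lemma one_sub_mul_pow_ne_zero (hz : ‖z‖ ≤ 1) (hx : ‖x‖ < 1) (m : ℕ) : 1 - x * z ^ m ≠ 0 :=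
  one_sub_ne_zero_of_norm_lt_one ((norm_mul_pow_le hz m).trans_lt hx)

lemma norm_pow_lt_one (hz : ‖z‖ < 1) {m : ℕ} (hm : m ≠ 0) : ‖z ^ m‖ < 1 := by
  rw [norm_pow]
  exact pow_lt_one₀ (norm_nonneg z) hz hm

lemma tendsto_pow_two_mul_atTop_nhds_zero (hz : ‖z‖ < 1) :
    Tendsto (fun j : ℕ => z ^ (2 * j)) atTop (𝓝 0) :=
  (tendsto_pow_atTop_nhds_zero_of_norm_lt_one hz).comp
    (strictMono_mul_left_of_pos two_pos).tendsto_atTop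

def gaussTerm (z x : 𝕜) (j : ℕ) : 𝕜 :=
  x ^ j * ∏ i ∈ range j, (1 - x * z ^ (2 * i)) / (1 - x * z ^ (2 * i + 1))

noncomputable def gaussSeries (z x : 𝕜) : 𝕜 :=
  ∑' j, gaussTerm z x j

@[simp]
lemma gaussTerm_zero (z x : 𝕜) : gaussTerm z x 0 = 1 := by
  simp [gaussTerm]

lemma gaussTerm_succ (z x : 𝕜) (j : ℕ) :
    gaussTerm z x (j + 1) =
      gaussTerm z x j * (x * ((1 - x * z ^ (2 * j)) / (1 - x * z ^ (2 * j + 1)))) := by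
  rw [gaussTerm, gaussTerm, prod_range_succ, pow_succ]
  ring

lemma gaussTerm_succ_mul {j : ℕ} (h : 1 - x * z ^ (2 * j + 1) ≠ 0) :
    gaussTerm z x (j + 1) * (1 - x * z ^ (2 * j + 1)) =
      x * (1 - x * z ^ (2 * j)) * gaussTerm z x j := by
  rw [gaussTerm_succ]
  field_simp

lemma tendsto_gaussTerm_ratio (hz : ‖z‖ < 1) (x : 𝕜) :
    Tendsto (fun j : ℕ => x * ((1 - x * z ^ (2 * j)) / (1 - x * z ^ (2 * j + 1))))
      atTop (𝓝 x) := by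
  have h := tendsto_pow_two_mul_atTop_nhds_zero hz
  have := (((h.const_mul x).const_sub 1).div (((h.mul_const z).const_mul x).const_sub 1)
    (by simp)).const_mul x
  simpa [pow_succ, mul_assoc] using this

lemma summable_gaussTerm [CompleteSpace 𝕜] (hz : ‖z‖ < 1) (hx : ‖x‖ < 1) :
    Summable (gaussTerm z x) := by
  obtain ⟨r, hxr, hr⟩ := exists_between hx
  refine summable_of_ratio_norm_eventually_le hr ?_
  filter_upwards [(tendsto_gaussTerm_ratio hz x).norm.eventually (gt_mem_nhds hxr)] with j hj
  rw [gaussTerm_succ, norm_mul, mul_comm]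
  exact mul_le_mul_of_nonneg_right hj.le (norm_nonneg _)

lemma norm_gaussTerm_le (hz : ‖z‖ ≤ 1) (hx : ‖x‖ ≤ 1 / 4) (j : ℕ) :
    ‖gaussTerm z x j‖ ≤ (1 / 2) ^ j := by
  induction j with
  | zero => simp
  | succ j ih =>
    have hnum : ‖1 - x * z ^ (2 * j)‖ ≤ 5 / 4 := by
      have := norm_sub_le (1 : 𝕜) (x * z ^ (2 * j))
      linarith [norm_one (α := 𝕜), norm_mul_pow_le (x := x) hz (2 * j)]
    have hden : 3 / 4 ≤ ‖1 - x * z ^ (2 * j + 1)‖ := by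
      have := norm_sub_norm_le (1 : 𝕜) (x * z ^ (2 * j + 1))
      linarith [norm_one (α := 𝕜), norm_mul_pow_le (x := x) hz (2 * j + 1)]
    have hratio : ‖x * ((1 - x * z ^ (2 * j)) / (1 - x * z ^ (2 * j + 1)))‖ ≤ 1 / 2 := by
      rw [norm_mul, norm_div]
      calc ‖x‖ * (‖1 - x * z ^ (2 * j)‖ / ‖1 - x * z ^ (2 * j + 1)‖)
          ≤ 1 / 4 * (5 / 4 / (3 / 4)) := by gcongr
        _ ≤ 1 / 2 := by norm_num
    rw [gaussTerm_succ, norm_mul, pow_succ (1 / 2 : ℝ)]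
    exact mul_le_mul ih hratio (norm_nonneg _) (by positivity)

lemma norm_gaussSeries_le (hz : ‖z‖ ≤ 1) (hx : ‖x‖ ≤ 1 / 4) : ‖gaussSeries z x‖ ≤ 2 :=
  tsum_of_norm_bounded hasSum_geometric_two (norm_gaussTerm_le hz hx)

lemma tendsto_pow_mul_gaussSeries (hz : ‖z‖ < 1) :
    Tendsto (fun n : ℕ => z ^ ((n + 1) * (2 * n + 1)) * gaussSeries z (z ^ (2 * n + 2)))
      atTop (𝓝 0) := by
  have hexp : Tendsto (fun n : ℕ => (n + 1) * (2 * n + 1)) atTop atTop :=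
    tendsto_atTop_mono (fun n => show n ≤ _ by nlinarith) tendsto_id
  have hsmall : Tendsto (fun n : ℕ => z ^ (2 * n + 2)) atTop (𝓝 0) :=
    (tendsto_pow_atTop_nhds_zero_of_norm_lt_one hz).comp
      (tendsto_atTop_mono (fun n => show n ≤ _ by omega) tendsto_id)
  refine ((tendsto_pow_atTop_nhds_zero_of_norm_lt_one hz).comp hexp).zero_mul_isBoundedUnder_le
    (isBoundedUnder_of_eventually_le (a := 2) ?_)
  filter_upwards [hsmall.eventually (Metric.closedBall_mem_nhds 0 (by norm_num : (0 : ℝ) < 1 / 4))]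
    with n hn
  exact norm_gaussSeries_le hz.le (mem_closedBall_zero_iff.mp hn)

lemma gaussTerm_mul_sq_shift (hxz : 1 - x * z ≠ 0) (j : ℕ) :
    x * (1 - x) * gaussTerm z (x * z ^ 2) j =
      z ^ (2 * j) * (1 - x * z) * gaussTerm z x (j + 1) := by
  induction j with
  | zero =>
    simp only [gaussTerm_succ, gaussTerm_zero, mul_zero, zero_add, pow_zero, pow_one]
    field_simp
  | succ j ih =>
    rw [gaussTerm_succ z (x * z ^ 2) j, gaussTerm_succ z x (j + 1)]
    linear_combination
      x * z ^ 2 * ((1 - x * z ^ (2 * (j + 1))) / (1 - x * z ^ (2 * (j + 1) + 1))) * ih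

lemma gaussTerm_telescope {j : ℕ} (hxz : 1 - x * z ≠ 0) (h : 1 - x * z ^ (2 * j + 1) ≠ 0) :
    (1 - x) * (gaussTerm z x j - z * x ^ 2 * gaussTerm z (x * z ^ 2) j) =
      gaussTerm z x j * (1 - x ^ 2 * z ^ (2 * j)) -
        gaussTerm z x (j + 1) * (1 - x ^ 2 * z ^ (2 * (j + 1))) := by
  linear_combination (-z * x) * gaussTerm_mul_sq_shift hxz j + gaussTerm_succ_mul h

def gaussProd (z : 𝕜) (n : ℕ) : 𝕜 :=
  ∏ m ∈ range n, (1 - z ^ (2 * (m + 1))) / (1 - z ^ (2 * (m + 1) - 1))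

lemma gaussTerm_sq_eq (hz : ‖z‖ < 1) (n : ℕ) :
    gaussTerm z (z ^ 2) n = z ^ (2 * n) * (1 - z) * gaussProd z n / (1 - z ^ (2 * n + 1)) := by
  have hz2 : ‖z ^ 2‖ < 1 := norm_pow_lt_one hz two_ne_zero
  induction n with
  | zero => simp [gaussProd, one_sub_ne_zero_of_norm_lt_one hz]
  | succ n ih =>
    have hsucc := gaussTerm_succ_mul (one_sub_mul_pow_ne_zero hz.le hz2 (2 * n + 1))
    rw [eq_div_iff (one_sub_ne_zero_of_norm_lt_one (norm_pow_lt_one hz (by omega))),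
      gaussProd, prod_range_succ, ← gaussProd, show 2 * (n + 1) - 1 = 2 * n + 1 by omega]
    linear_combination hsucc + (z ^ 2 * (1 - z ^ (2 * n + 2))) * ih

lemma gaussProd_eq_one_add_sum (hz : ‖z‖ < 1) (n : ℕ) :
    gaussProd z n = 1 + z * ∑ j ∈ range n, gaussTerm z (z ^ 2) j := by
  have hstep : ∀ j, gaussProd z (j + 1) - gaussProd z j = z * gaussTerm z (z ^ 2) j := by
    intro j
    have hd := one_sub_ne_zero_of_norm_lt_one (norm_pow_lt_one hz (Nat.succ_ne_zero (2 * j)))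
    rw [gaussTerm_sq_eq hz, gaussProd, prod_range_succ, ← gaussProd,
      show 2 * (j + 1) - 1 = 2 * j + 1 by omega]
    field_simp
    ring
  rw [mul_sum, ← sum_congr rfl fun j _ => hstep j, sum_range_sub]
  simp [gaussProd]

variable [CompleteSpace 𝕜]

lemma gaussSeries_eq (hz : ‖z‖ < 1) (hx : ‖x‖ < 1) :
    gaussSeries z x = 1 + x + z * x ^ 2 * gaussSeries z (x * z ^ 2) := by
  set v : ℕ → 𝕜 := fun j => gaussTerm z x j * (1 - x ^ 2 * z ^ (2 * j))
  have hS := summable_gaussTerm hz hx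
  have hS' := summable_gaussTerm hz ((norm_mul_pow_le hz.le 2).trans_lt hx)
  have hv : Tendsto v atTop (𝓝 0) := by
    simpa using hS.tendsto_atTop_zero.mul
      (((tendsto_pow_two_mul_atTop_nhds_zero hz).const_mul (x ^ 2)).const_sub 1)
  have hsum := ((hS.hasSum.sub (hS'.hasSum.mul_left (z * x ^ 2))).mul_left (1 - x)).tendsto_sum_nat
  have hpartial : ∀ n, ∑ j ∈ range n,
      (1 - x) * (gaussTerm z x j - z * x ^ 2 * gaussTerm z (x * z ^ 2) j) = v 0 - v n := by
    intro n
    rw [← sum_range_sub' v n]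
    refine sum_congr rfl fun j _ => ?_
    exact gaussTerm_telescope (by simpa using one_sub_mul_pow_ne_zero hz.le hx 1)
      (one_sub_mul_pow_ne_zero hz.le hx _)
  have hlim := tendsto_nhds_unique hsum ((tendsto_congr hpartial).mpr (hv.const_sub (v 0)))
  simp only [v, gaussTerm_zero, mul_zero, pow_zero, mul_one, one_mul, sub_zero] at hlim
  unfold gaussSeries
  apply mul_left_cancel₀ (one_sub_ne_zero_of_norm_lt_one hx)
  linear_combination hlim

lemma pow_mul_gaussSeries_eq (hz : ‖z‖ < 1) (n : ℕ) :
    z ^ ((n + 1) * (2 * n + 1)) * gaussSeries z (z ^ (2 * n + 2)) =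
      z ^ ((n + 1) * (2 * n + 1)) + z ^ ((n + 1) * (2 * n + 3)) +
        z ^ ((n + 2) * (2 * n + 3)) * gaussSeries z (z ^ (2 * (n + 1) + 2)) := by
  rw [gaussSeries_eq hz (norm_pow_lt_one hz (by omega)),
    show z ^ (2 * (n + 1) + 2) = z ^ (2 * n + 2) * z ^ 2 by ring]
  ring

lemma sum_range_pow_triangle_add (hz : ‖z‖ < 1) (N : ℕ) :
    ∑ k ∈ range (2 * N + 1), z ^ (k * (k + 1) / 2) +
        z ^ ((N + 1) * (2 * N + 1)) * gaussSeries z (z ^ (2 * N + 2)) =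
      1 + z * gaussSeries z (z ^ 2) := by
  induction N with
  | zero => simp
  | succ N ih =>
    have hodd : (2 * N + 1) * (2 * N + 1 + 1) / 2 = (N + 1) * (2 * N + 1) :=
      Nat.div_eq_of_eq_mul_left two_pos (by ring)
    have heven : (2 * N + 1 + 1) * (2 * N + 1 + 1 + 1) / 2 = (N + 1) * (2 * N + 3) :=
      Nat.div_eq_of_eq_mul_left two_pos (by ring)
    rw [← ih, pow_mul_gaussSeries_eq hz N, show 2 * (N + 1) + 1 = 2 * N + 1 + 1 + 1 by ring,
      sum_range_succ, sum_range_succ, hodd, heven]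
    ring

lemma summable_pow_triangle (hz : ‖z‖ < 1) : Summable fun k : ℕ => z ^ (k * (k + 1) / 2) := by
  refine Summable.of_norm_bounded (summable_geometric_of_lt_one (norm_nonneg z) hz) fun k => ?_
  rw [norm_pow]
  exact pow_le_pow_of_le_one (norm_nonneg z) hz.le (Nat.le_div_iff_mul_le two_pos |>.mpr
    (by rcases Nat.eq_zero_or_pos k with rfl | hk <;> nlinarith))

lemma tsum_pow_triangle (hz : ‖z‖ < 1) :
    ∑' k : ℕ, z ^ (k * (k + 1) / 2) = 1 + z * gaussSeries z (z ^ 2) := by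
  have hodd : Tendsto (fun N : ℕ => ∑ k ∈ range (2 * N + 1), z ^ (k * (k + 1) / 2)) atTop
      (𝓝 (∑' k : ℕ, z ^ (k * (k + 1) / 2))) :=
    (summable_pow_triangle hz).hasSum.tendsto_sum_nat.comp
      (tendsto_atTop_mono (fun n => show n ≤ _ by omega) tendsto_id)
  refine tendsto_nhds_unique hodd ?_
  simpa using (tendsto_pow_mul_gaussSeries hz).const_sub (1 + z * gaussSeries z (z ^ 2)) |>.congr
    fun N => eq_sub_of_add_eq (sum_range_pow_triangle_add hz N) |>.symm

end GaussSeries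

/-- Gauss's identity: for `|z| < 1`,
`∑_{k=0}^∞ z^{k(k+1)/2} = ∏_{k=1}^∞ (1 - z^{2k}) / (1 - z^{2k-1})`. -/
theorem gauss_triangular_identity (z : ℂ) (hz : ‖z‖ < 1) :
    Tendsto (fun n => ∏ m ∈ range n, (1 - z ^ (2 * (m + 1))) / (1 - z ^ (2 * (m + 1) - 1)))
      atTop (nhds (∑' k : ℕ, z ^ (k * (k + 1) / 2))) := by
  have hF := (summable_gaussTerm hz (norm_pow_lt_one hz two_ne_zero)).hasSum.tendsto_sum_nat
  change Tendsto (gaussProd z) atTop _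
  rw [tsum_pow_triangle hz, funext (gaussProd_eq_one_add_sum hz)]
  exact (hF.const_mul z).const_add 1
end

section
/- Define the two-variable partition polynomial p(k,ω) = Σ_{i=1}^{k} p_i(k) ω^i, where p_i(k) is the number of partitions of k into exactly i parts. Then for every k ≥ 0: Σ_{j=0}^{2k+1} p(j,ω)·p(2k+1−j,−ω) = 0, and Σ_{j=0}^{2k} p(j,ω)·p(2k−j,−ω) = p(k,ω²), as identities of polynomials in ω (with p(0,ω)=1). -/
open Finset Polynomial

/-- The partition polynomial `p(k, ω) = ∑_i p_i(k) ω^i`, where `p_i(k)` is the number of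
partitions of `k` into exactly `i` parts (and `p(0, ω) = 1`). -/
noncomputable def partitionPoly (k : ℕ) : Polynomial ℤ :=
  ∑ i ∈ Finset.range (k + 1),
    C (((Finset.univ.filter fun p : Nat.Partition k => p.parts.card = i).card : ℤ)) * X ^ i

/-!
Write `F_r = ∑ₙ (∑_{λ ⊢ n} r ^ #λ) zⁿ`, so that `partitionPoly n` is the coefficient of `zⁿ` in
`F_ω` over `ℤ[ω]`. Euler's product `F_r = ∏ₘ (1 - r zᵐ)⁻¹` and the factorisation
`(1 - ω zᵐ)(1 + ω zᵐ) = 1 - ω² z²ᵐ` give `F_ω · F_{-ω} = F_{ω²}(z²)`. Comparing coefficients of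
`zⁿ`, the left side yields the convolution and the right side vanishes for odd `n` and is
`p(n/2, ω²)` for even `n`.
-/

namespace PowerSeries

open WithPiTopology

variable {R : Type*}

theorem WithPiTopology.continuous_expand [CommRing R] [TopologicalSpace R] (p : ℕ) (hp : p ≠ 0) :
    Continuous (expand p hp : R⟦X⟧ → R⟦X⟧) := by
  refine continuous_iff_continuousAt.mpr fun f =>
    (tendsto_iff_coeff_tendsto _ _ _ _).mpr fun n => ?_
  simp_rw [coeff_expand]
  split_ifs
  · exact (continuous_coeff R _).continuousAt
  · exact tendsto_const_nhds

noncomputable def partitionSeries [CommSemiring R] (r : R) : R⟦X⟧ :=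
  Nat.Partition.genFun fun _ c => r ^ c

theorem coeff_partitionSeries [CommSemiring R] (r : R) (n : ℕ) :
    coeff n (partitionSeries r) = ∑ p : n.Partition, r ^ p.parts.card := by
  simp only [partitionSeries, Nat.Partition.coeff_genFun, Finsupp.prod, Multiset.toFinsupp_support,
    Multiset.toFinsupp_apply, Finset.prod_pow_eq_pow_sum, Multiset.toFinset_sum_count_eq]

section Topological

variable [CommRing R] [TopologicalSpace R] [IsTopologicalRing R] [T2Space R]

theorem WithPiTopology.hasProd_partitionSeries (r : R) :
    HasProd (fun i => ∑' j, (C r * X ^ (i + 1)) ^ j) (partitionSeries r) := by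
  convert! Nat.Partition.hasProd_genFun (fun _ c => r ^ c) using 1
  ext1 i
  have hq : constantCoeff (C r * X ^ (i + 1) : R⟦X⟧) = 0 := by simp
  rw [(summable_pow_of_constantCoeff_eq_zero hq).tsum_eq_zero_add]
  simp [smul_eq_C_mul, mul_pow, pow_mul]

theorem WithPiTopology.tsum_pow_mul_tsum_neg_pow {q : R⟦X⟧} (hq : constantCoeff q = 0) :
    (∑' j, q ^ j) * ∑' j, (-q) ^ j = ∑' j, (q ^ 2) ^ j := by
  have hgeom {f : R⟦X⟧} (hf : constantCoeff f = 0) :=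
    tsum_pow_mul_one_sub_of_constantCoeff_eq_zero hf
  have hq2 : (∑' j, (q ^ 2) ^ j) * (1 - q ^ 2) = 1 := hgeom (by simp [hq])
  refine (IsUnit.of_mul_eq_one_right _ hq2).mul_right_cancel ?_
  calc (∑' j, q ^ j) * (∑' j, (-q) ^ j) * (1 - q ^ 2)
      = ((∑' j, q ^ j) * (1 - q)) * ((∑' j, (-q) ^ j) * (1 - -q)) := by ring
    _ = _ := by rw [hgeom hq, hgeom (by simp [hq]), hq2, one_mul]

theorem WithPiTopology.tsum_geometric_mul_tsum_geometric_neg_eq_expand (r : R) {m : ℕ}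
    (hm : m ≠ 0) :
    (∑' j, (C r * X ^ m) ^ j) * ∑' j, (C (-r) * X ^ m) ^ j
      = expand 2 two_ne_zero (∑' j, (C (r ^ 2) * X ^ m) ^ j) := by
  have hq : constantCoeff (C r * X ^ m : R⟦X⟧) = 0 := by simp [hm]
  rw [(summable_pow_of_constantCoeff_eq_zero (by simp [hm])).map_tsum _ (continuous_expand 2 _)]
  simp only [map_pow, map_mul, expand_C, expand_X, map_neg, neg_mul]
  convert tsum_pow_mul_tsum_neg_pow hq using 3 with j
  ring

end Topological

theorem partitionSeries_mul_partitionSeries_neg [CommRing R] (r : R) :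
    partitionSeries r * partitionSeries (-r) = expand 2 two_ne_zero (partitionSeries (r ^ 2)) := by
  -- The discrete topology only serves to make sense of the Euler products.
  let _ : TopologicalSpace R := ⊥
  have _ : DiscreteTopology R := ⟨rfl⟩
  refine ((hasProd_partitionSeries r).mul (hasProd_partitionSeries (-r))).unique ?_
  convert (hasProd_partitionSeries (r ^ 2)).map _ (continuous_expand 2 two_ne_zero) using 1
  ext1 i
  exact tsum_geometric_mul_tsum_geometric_neg_eq_expand r i.succ_ne_zero

end PowerSeries

theorem Nat.Partition.card_parts_le {n : ℕ} (p : n.Partition) : p.parts.card ≤ n := by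
  simpa [p.parts_sum] using Multiset.card_nsmul_le_sum (s := p.parts) (a := 1) fun _ => p.parts_pos

theorem partitionPoly_eq_sum (n : ℕ) : partitionPoly n = ∑ p : n.Partition, X ^ p.parts.card := by
  rw [partitionPoly, ← sum_fiberwise_of_maps_to (g := fun p : n.Partition => p.parts.card)
    (t := range (n + 1)) fun p _ => mem_range.mpr (Nat.lt_succ_of_le p.card_parts_le)]
  refine sum_congr rfl fun i _ => ?_
  rw [sum_congr rfl fun p hp => by rw [(mem_filter.mp hp).2], sum_const, nsmul_eq_mul,
    C_eq_natCast]

theorem coeff_partitionSeries_eq_comp (q : ℤ[X]) (n : ℕ) :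
    PowerSeries.coeff n (PowerSeries.partitionSeries q) = (partitionPoly n).comp q := by
  simp [PowerSeries.coeff_partitionSeries, partitionPoly_eq_sum]

/-- Identities for partition polynomials coming from
`∏ (1 - ω² z^{2m})⁻¹ = ∏ (1 - ω z^m)⁻¹ · ∏ (1 + ω z^m)⁻¹`. -/
theorem partitionPoly_convolution (k : ℕ) :
    (∑ j ∈ Finset.range (2 * k + 2),
        partitionPoly j * (partitionPoly (2 * k + 1 - j)).comp (-X) = 0) ∧
      (∑ j ∈ Finset.range (2 * k + 1),
        partitionPoly j * (partitionPoly (2 * k - j)).comp (-X)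
          = (partitionPoly k).comp (X ^ 2)) := by
  have hconv (n : ℕ) :
      ∑ j ∈ range (n + 1), partitionPoly j * (partitionPoly (n - j)).comp (-X)
        = PowerSeries.coeff n
            (PowerSeries.expand 2 two_ne_zero (PowerSeries.partitionSeries (X ^ 2 : ℤ[X]))) := by
    rw [← PowerSeries.partitionSeries_mul_partitionSeries_neg, PowerSeries.coeff_mul,
      Nat.sum_antidiagonal_eq_sum_range_succ_mk]
    simp only [coeff_partitionSeries_eq_comp, comp_X]
  refine ⟨?_, ?_⟩
  · rw [hconv, PowerSeries.coeff_expand_of_not_dvd]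
    omega
  · rw [hconv, PowerSeries.coeff_expand_mul, coeff_partitionSeries_eq_comp]
end

section
/- Writing e^y as the infinite product ∏_{i=1}^∞ (1 + C_i y^i) with C_1 = 1, the coefficients C_i satisfy for every i ≥ 2 the recurrence Σ_{d | i} ((−1)^{d+1}/d) · (C_{i/d})^d = 0. -/
/-!
Let `θ = X d/dX`. Being a derivation, `θ` turns the product `P = ∏_{j ≤ i} (1 + C_j X^j)` into
`θ P = P · ∑_j θ log (1 + C_j X^j)`, and the coefficient of `X^k` in that sum is `k` times the
divisor sum of the statement. The hypothesis says `P ≡ exp` modulo `X^(i+1)`; since `θ exp = X exp`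
and `θ` preserves this congruence, `P · (∑_j θ log (1 + C_j X^j) - X) ≡ 0`, and `P` is a unit.
Reading off the coefficient of `X^i` gives `i · ∑_{d ∣ i} ((-1)^(d+1)/d) C_{i/d}^d = 0`.
-/

open Finset PowerSeries

theorem Derivation.map_prod_eq_prod_mul_sum {ι R A : Type*} [CommSemiring R] [CommSemiring A]
    [Algebra R A] (D : Derivation R A A) (s : Finset ι) (f g : ι → A)
    (h : ∀ i ∈ s, D (f i) = f i * g i) :
    D (∏ i ∈ s, f i) = (∏ i ∈ s, f i) * ∑ i ∈ s, g i := by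
  classical
  induction s using Finset.induction_on with
  | empty => simp
  | insert a s ha ih =>
    rw [prod_insert ha, sum_insert ha, Derivation.leibniz, smul_eq_mul, smul_eq_mul,
      h a (mem_insert_self a s), ih fun i hi => h i (mem_insert_of_mem hi)]
    ring

namespace PowerSeries

variable {R : Type*} [CommRing R]

variable (R) in
noncomputable def eulerDerivation : Derivation R R⟦X⟧ R⟦X⟧ := (X : R⟦X⟧) • derivative R

theorem coeff_eulerDerivation (f : R⟦X⟧) (n : ℕ) :
    coeff n (eulerDerivation R f) = n * coeff n f := by
  rcases n with _ | n
  · simp [eulerDerivation]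
  · simp [eulerDerivation, coeff_succ_X_mul, coeff_derivative, mul_comm]

theorem X_pow_dvd_eulerDerivation {N : ℕ} {f : R⟦X⟧} (h : X ^ N ∣ f) :
    X ^ N ∣ eulerDerivation R f := by
  rw [X_pow_dvd_iff] at h ⊢
  intro m hm
  rw [coeff_eulerDerivation, h m hm, mul_zero]

theorem eulerDerivation_exp [Algebra ℚ R] : eulerDerivation R (exp R) = X * exp R := by
  ext (_ | n)
  · simp [coeff_eulerDerivation]
  · rw [coeff_eulerDerivation, coeff_succ_X_mul, coeff_exp, coeff_exp,
      ← map_natCast (algebraMap ℚ R), ← map_mul, Nat.factorial_succ]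
    congr 1
    field_simp
    push_cast
    ring

/-- `θ log (1 + c X^j) = ∑_{k ≥ 1} (-1)^(k+1) j c^k X^(jk)`, with `θ = eulerDerivation`. -/
noncomputable def eulerLogDeriv (c : R) (j : ℕ) : R⟦X⟧ :=
  mk fun m => if j ∈ m.divisors then j * (-1) ^ (m / j + 1) * c ^ (m / j) else 0

theorem one_add_C_mul_X_pow_mul_eulerLogDeriv (c : R) (j : ℕ) :
    (1 + C c * X ^ j) * eulerLogDeriv c j = C (j * c) * X ^ j := by
  ext m
  rw [add_mul, one_mul, mul_comm, ← mul_assoc, mul_comm _ (C c), mul_assoc, map_add, coeff_C_mul,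
    coeff_mul_X_pow', coeff_C_mul_X_pow]
  simp only [eulerLogDeriv, coeff_mk, Nat.mem_divisors]
  rcases Nat.eq_zero_or_pos j with rfl | hj
  · simp
  by_cases hdvd : j ∣ m
  · obtain ⟨q, rfl⟩ := hdvd
    rcases q with _ | _ | q
    · simp [hj.ne, hj.ne']
    · simp [hj.ne', Nat.div_self hj]
    · have hsub : j * (q + 2) - j = j * (q + 1) := by rw [Nat.mul_succ, Nat.add_sub_cancel]
      rw [if_pos (Nat.le_mul_of_pos_right j (by omega)), hsub,
        if_neg (show j * (q + 2) ≠ j by nlinarith)]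
      simp [Nat.mul_div_cancel_left _ hj, hj.ne']
      ring
  · have hdvd' : ¬ (j ∣ m - j ∧ m - j ≠ 0) := fun ⟨h, hm⟩ => hdvd <| by
      simpa [Nat.sub_add_cancel (by omega : j ≤ m)] using Nat.dvd_add h (dvd_refl j)
    rw [if_neg (fun h => hdvd h.1), if_neg hdvd',
      if_neg (show m ≠ j by rintro rfl; exact hdvd dvd_rfl)]
    simp

theorem eulerDerivation_one_add_C_mul_X_pow (c : R) (j : ℕ) :
    eulerDerivation R (1 + C c * X ^ j) = (1 + C c * X ^ j) * eulerLogDeriv c j := by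
  rw [one_add_C_mul_X_pow_mul_eulerLogDeriv]
  ext m
  rw [coeff_eulerDerivation, map_add, coeff_one, coeff_C_mul_X_pow, coeff_C_mul_X_pow]
  split_ifs <;> simp_all [mul_comm]

theorem coeff_sum_eulerLogDeriv {K : Type*} [Field K] [CharZero K] (c : ℕ → K) {k n : ℕ}
    (hk : k ≤ n) :
    coeff k (∑ j ∈ Icc 1 n, eulerLogDeriv (c j) j)
      = k * ∑ d ∈ k.divisors, (-1) ^ (d + 1) / d * c (k / d) ^ d := by
  have hsub : k.divisors ⊆ Icc 1 n := fun j hj =>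
    mem_Icc.2 ⟨Nat.pos_of_mem_divisors hj, (Nat.divisor_le hj).trans hk⟩
  rw [map_sum]
  simp only [eulerLogDeriv, coeff_mk]
  rw [← sum_filter, filter_mem_eq_inter, inter_eq_right.2 hsub, ← Nat.sum_div_divisors, mul_sum]
  refine sum_congr rfl fun d hd => ?_
  obtain ⟨hdk, hk0⟩ := Nat.mem_divisors.1 hd
  have hd0 : (d : K) ≠ 0 := Nat.cast_ne_zero.2 (Nat.pos_of_mem_divisors hd).ne'
  rw [Nat.div_div_self hdk hk0, Nat.cast_div hdk hd0]
  field_simp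

theorem X_pow_dvd_prod_sub_one {ι : Type*} {N : ℕ} {s : Finset ι} {f : ι → R⟦X⟧}
    (h : ∀ i ∈ s, X ^ N ∣ f i - 1) : X ^ N ∣ ∏ i ∈ s, f i - 1 :=
  prod_induction f (fun g => X ^ N ∣ g - 1)
    (fun a b ha hb => by simpa [mul_sub, sub_mul] using dvd_add (dvd_mul_of_dvd_left ha b) hb)
    (by simp) h

theorem coeff_mul_of_X_pow_dvd_sub_one {k : ℕ} {f g : R⟦X⟧} (hg : X ^ (k + 1) ∣ g - 1) :
    coeff k (f * g) = coeff k f := by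
  obtain ⟨h, hh⟩ := hg
  rw [show f * g = f + X ^ (k + 1) * (f * h) by rw [mul_left_comm, ← hh]; ring, map_add,
    coeff_X_pow_mul', if_neg (by omega), add_zero]

theorem coeff_prod_one_add_C_mul_X_pow_of_le (c : ℕ → R) {k n : ℕ} (hk : k ≤ n) :
    coeff k (∏ j ∈ Icc 1 n, (1 + C (c j) * X ^ j))
      = coeff k (∏ j ∈ Icc 1 k, (1 + C (c j) * X ^ j)) := by
  have hIoc (m : ℕ) : Icc 1 m = Ioc 0 m := by rw [← Icc_add_one_left_eq_Ioc, zero_add]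
  rw [hIoc, hIoc, ← prod_Ioc_consecutive _ k.zero_le hk,
    coeff_mul_of_X_pow_dvd_sub_one (X_pow_dvd_prod_sub_one fun j hj => ?_)]
  rw [add_sub_cancel_left]
  exact dvd_mul_of_dvd_right (pow_dvd_pow X (mem_Ioc.1 hj).1) _

end PowerSeries

theorem exp_product_coefficient_recurrence_general (C : ℕ → ℚ)
    (hprod : ∀ n : ℕ,
      PowerSeries.coeff (R := ℚ) n
          (∏ i ∈ Finset.Icc 1 n, (1 + PowerSeries.C (R := ℚ) (C i) * (PowerSeries.X : ℚ⟦X⟧) ^ i))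
        = PowerSeries.coeff (R := ℚ) n (PowerSeries.exp ℚ)) :
    ∀ i : ℕ, 2 ≤ i → ∑ d ∈ i.divisors, ((-1 : ℚ) ^ (d + 1) / d) * (C (i / d)) ^ d = 0 := by
  intro i hi
  set P := ∏ j ∈ Icc 1 i, (1 + PowerSeries.C (C j) * X ^ j)
  set M := ∑ j ∈ Icc 1 i, eulerLogDeriv (C j) j
  have hPE : X ^ (i + 1) ∣ P - exp ℚ := X_pow_dvd_iff.2 fun k hk => by
    rw [map_sub, coeff_prod_one_add_C_mul_X_pow_of_le C (Nat.lt_succ_iff.1 hk), hprod, sub_self]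
  have hθP : eulerDerivation ℚ P = P * M := (eulerDerivation ℚ).map_prod_eq_prod_mul_sum _ _ _
    fun j _ => eulerDerivation_one_add_C_mul_X_pow _ _
  have hPM : X ^ (i + 1) ∣ P * (M - X) := by
    convert dvd_sub (X_pow_dvd_eulerDerivation hPE) (dvd_mul_of_dvd_right hPE X) using 1
    rw [map_sub, hθP, eulerDerivation_exp]
    ring
  have hP : IsUnit P := isUnit_iff_constantCoeff.2 <| by
    rw [map_prod, prod_eq_one fun j hj => by simp [Nat.one_le_iff_ne_zero.1 (mem_Icc.1 hj).1]]
    exact isUnit_one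
  have hcoeff := X_pow_dvd_iff.1 (hP.dvd_mul_left.1 hPM) i i.lt_succ_self
  rw [map_sub, coeff_sum_eulerLogDeriv C le_rfl, coeff_X, if_neg (by omega), sub_zero] at hcoeff
  exact (mul_eq_zero.1 hcoeff).resolve_left (by norm_cast; omega)

/-- If `exp(y) = ∏_{i=1}^∞ (1 + C_i y^i)` as formal power series (expressed via the fact
that the coefficient of `y^n` in the product stabilizes once all factors with `i ≤ n` are
included) with `C 1 = 1`, then for every `i ≥ 2` the coefficients satisfy the recurrence
`∑_{d ∣ i} ((-1)^{d+1}/d) · (C_{i/d})^d = 0`. -/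
theorem exp_product_coefficient_recurrence (C : ℕ → ℚ) (hC1 : C 1 = 1)
    (hprod : ∀ n : ℕ,
      PowerSeries.coeff (R := ℚ) n
          (∏ i ∈ Finset.Icc 1 n, (1 + PowerSeries.C (R := ℚ) (C i) * (PowerSeries.X : ℚ⟦X⟧) ^ i))
        = PowerSeries.coeff (R := ℚ) n (PowerSeries.exp ℚ)) :
    ∀ i : ℕ, 2 ≤ i → ∑ d ∈ i.divisors, ((-1 : ℚ) ^ (d + 1) / d) * (C (i / d)) ^ d = 0 :=
  exp_product_coefficient_recurrence_general C hprod
end
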